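/- arXiv:2010.09505 — 8 statements merged into one kernel-verified Lean document; each statement's English description precedes it below -/
import Mathlib

section
/- For all n ≥ 0 and q ≥ 1, the image of the set of q-decreasing words of length n under ψ^q equals the set of q-decreasing words of length n+q+1 that end with at least q ones. -/
/-- A binary word (`List Bool`, `true` = bit 1) is `q`-decreasing if it is a
concatenation `1^{b0} ++ 0^{a1}1^{b1} ++ ... ++ 0^{am}1^{bm}` where every
block `0^a 1^b` with `a > 0` satisfies `q*a > b` (equivalently, every maximal
factor of the form `0^a 1^b` with `a > 0` satisfies `q*a > b`). -/
inductive QDecreasing (q : ℕ) : List Bool → Prop where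
  | ones (m : ℕ) : QDecreasing q (List.replicate m true)
  | snoc (w : List Bool) (a b : ℕ) (ha : 0 < a) (hb : b < q * a)
      (hw : QDecreasing q w) :
      QDecreasing q (w ++ List.replicate a false ++ List.replicate b true)

/-- The map `ψ^q`: if `w = v · 0 · 1^k`, then `ψ^q w = v · 0 · 0 · 1^{k+q}`;
otherwise (`w = 1^n`), `ψ^q w = 1^{n+q+1}`. -/
def psi (q : ℕ) (w : List Bool) : List Bool :=
  if false ∈ w then
    (w.reverse.dropWhile (fun b => b)).reverse
      ++ false :: List.replicate ((w.reverse.takeWhile (fun b => b)).length + q) true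
  else List.replicate (w.length + q + 1) true

lemma takeWhile_rep (b : ℕ) (x : List Bool) :
    (List.replicate b true ++ false :: x).takeWhile (fun c => c) = List.replicate b true := by
  induction b with
  | zero => simp [List.takeWhile]
  | succ n ih => simp [List.replicate_succ, List.takeWhile, ih]

lemma dropWhile_rep (b : ℕ) (x : List Bool) :
    (List.replicate b true ++ false :: x).dropWhile (fun c => c) = false :: x := by
  induction b with
  | zero => simp [List.dropWhile]
  | succ n ih => simp [List.replicate_succ, List.dropWhile, ih]

lemma rep_shift (a : ℕ) (x : List Bool) :
    List.replicate a false ++ false :: x = false :: (List.replicate a false ++ x) := by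
  induction a with
  | zero => simp
  | succ n ih => simp [List.replicate_succ, ih]

lemma psi_ones (q m : ℕ) : psi q (List.replicate m true) = List.replicate (m + q + 1) true := by
  simp [psi, List.mem_replicate]

lemma psi_append (q : ℕ) (v : List Bool) (a b : ℕ) (ha : 0 < a) :
    psi q (v ++ List.replicate a false ++ List.replicate b true)
      = v ++ List.replicate (a + 1) false ++ List.replicate (b + q) true := by
  obtain ⟨a', rfl⟩ : ∃ a', a = a' + 1 := ⟨a - 1, by omega⟩
  have hmem : false ∈ v ++ List.replicate (a' + 1) false ++ List.replicate b true := by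
    simp [List.mem_replicate]
  have hrev : (v ++ List.replicate (a' + 1) false ++ List.replicate b true).reverse
      = List.replicate b true ++ false :: (List.replicate a' false ++ v.reverse) := by
    simp [List.replicate_succ, List.reverse_append, rep_shift]
  rw [psi, if_pos hmem, hrev, takeWhile_rep, dropWhile_rep]
  simp [List.replicate_succ, List.reverse_append, rep_shift]

lemma not_prefix_rep : ∀ (b q : ℕ) (x : List Bool), b < q →
    ¬ (List.replicate q true <+: (List.replicate b true ++ false :: x)) := by
  intro b
  induction b with
  | zero =>
    intro q x hq h
    obtain ⟨q', rfl⟩ : ∃ q', q = q' + 1 := ⟨q - 1, by omega⟩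
    simp [List.replicate_succ, List.cons_prefix_cons] at h
  | succ n ih =>
    intro q x hq h
    obtain ⟨q', rfl⟩ : ∃ q', q = q' + 1 := ⟨q - 1, by omega⟩
    rw [List.replicate_succ, List.replicate_succ, List.cons_append,
      List.cons_prefix_cons] at h
    exact ih q' x (by omega) h.2

lemma suffix_ge (q : ℕ) (v : List Bool) (a b : ℕ) (ha : 0 < a)
    (h : List.replicate q true <:+ v ++ List.replicate a false ++ List.replicate b true) :
    q ≤ b := by
  by_contra hb
  push_neg at hb
  obtain ⟨a', rfl⟩ : ∃ a', a = a' + 1 := ⟨a - 1, by omega⟩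
  rw [← List.reverse_prefix] at h
  apply not_prefix_rep b q (List.replicate a' false ++ v.reverse) hb
  have : (v ++ List.replicate (a' + 1) false ++ List.replicate b true).reverse
      = List.replicate b true ++ false :: (List.replicate a' false ++ v.reverse) := by
    simp [List.replicate_succ, List.reverse_append, rep_shift]
  rw [this] at h
  simpa using h

theorem psi_image_qdecreasing (n q : ℕ) (hq : 1 ≤ q) :
    psi q '' {w : List Bool | w.length = n ∧ QDecreasing q w} =
      {w : List Bool | w.length = n + q + 1 ∧ QDecreasing q w ∧
        List.replicate q true <:+ w} := by
  ext u
  constructor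
  · rintro ⟨w, ⟨hlen, hw⟩, rfl⟩
    cases hw with
    | ones m =>
      simp at hlen
      subst hlen
      rw [psi_ones]
      refine ⟨by simp, QDecreasing.ones _, ?_⟩
      have : List.replicate (m + q + 1) true
          = List.replicate (m + 1) true ++ List.replicate q true := by
        rw [← List.replicate_add]; ring_nf
      rw [this]
      exact List.suffix_append _ _
    | snoc v a b ha hb hv =>
      rw [psi_append q v a b ha]
      refine ⟨?_, ?_, ?_⟩
      · simp at hlen ⊢; omega
      · exact QDecreasing.snoc v (a + 1) (b + q) (by omega)
          (by rw [Nat.mul_add, Nat.mul_one]; omega) hv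
      · have h1 : List.replicate q true <:+ List.replicate (b + q) true := by
          rw [List.replicate_add]; exact List.suffix_append _ _
        exact h1.trans (List.suffix_append _ _)
  · rintro ⟨hlen, hu, hsuf⟩
    cases hu with
    | ones m =>
      simp at hlen
      refine ⟨List.replicate n true, ⟨by simp, QDecreasing.ones n⟩, ?_⟩
      rw [psi_ones]; simp [hlen]
    | snoc v a b ha hb hv =>
      have hbq : q ≤ b := suffix_ge q v a b ha hsuf
      have ha2 : 2 ≤ a := by
        rcases Nat.lt_or_ge a 2 with h | h
        · interval_cases a
          · omega
        · exact h
      refine ⟨v ++ List.replicate (a - 1) false ++ List.replicate (b - q) true,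
        ⟨?_, ?_⟩, ?_⟩
      · simp at hlen ⊢; omega
      · refine QDecreasing.snoc v (a - 1) (b - q) (by omega) ?_ hv
        have : q * (a - 1) + q = q * a := by
          rw [← Nat.mul_succ]; congr 1; omega
        omega
      · rw [psi_append q v (a - 1) (b - q) (by omega)]
        congr 2 <;> congr 1 <;> omega
end

section
/- For all n ≥ 0 and q ≥ 1, the number of q-decreasing words of length n equals the (n+q+1)-th (q+1)-generalized Fibonacci number f_{n+q+1, q+1}. -/
/-- `k`-generalized Fibonacci numbers: `f_{n,k} = 0` for `n ≤ k-2`,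
`f_{k-1,k} = 1`, and `f_{n,k} = ∑_{i=1}^{k} f_{n-i,k}` for `n ≥ k`. -/
def genFib (k : ℕ) : ℕ → ℕ
  | n =>
    if n + 1 < k then 0
    else if n + 1 = k then 1
    else if k = 0 then 0
    else ∑ i ∈ Finset.range k, genFib k (n - (i + 1))
  termination_by n => n
  decreasing_by omega

/-- Checker on reversed words. State: `b` = pending ones, `a` = zeros counted
in current block (`a = 0`: still reading the trailing ones run). -/
def rrun (q : ℕ) : ℕ → ℕ → List Bool → Bool
  | _, 0, [] => true
  | b, a+1, [] => decide (b < q * (a+1))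
  | b, 0, true :: l => rrun q (b+1) 0 l
  | b, a+1, true :: l => decide (b < q * (a+1)) && rrun q 1 0 l
  | b, a, false :: l => rrun q b (a+1) l

@[simp] lemma rrun_nil0 (q b : ℕ) : rrun q b 0 [] = true := rfl
@[simp] lemma rrun_nilS (q b a : ℕ) : rrun q b (a+1) [] = decide (b < q * (a+1)) := rfl
@[simp] lemma rrun_true0 (q b : ℕ) (l : List Bool) :
    rrun q b 0 (true :: l) = rrun q (b+1) 0 l := rfl
@[simp] lemma rrun_trueS (q b a : ℕ) (l : List Bool) :
    rrun q b (a+1) (true :: l) = (decide (b < q * (a+1)) && rrun q 1 0 l) := rfl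
@[simp] lemma rrun_false (q b a : ℕ) (l : List Bool) :
    rrun q b a (false :: l) = rrun q b (a+1) l := by
  cases a <;> rfl

section BoolLemmas
variable {q : ℕ}

lemma rrun_G1 : ∀ (l : List Bool) (a a' b' : ℕ), 0 < a → 0 < a' → b' < q * a' →
    rrun q 0 a l = true → rrun q b' a' l = true
  | [], a, a', b', ha, ha', hb, _ => by
    obtain ⟨a'', rfl⟩ := Nat.exists_eq_add_of_lt ha'
    simp only [Nat.zero_add, rrun_nilS, decide_eq_true_eq, Nat.mul_succ] at hb ⊢
    omega
  | true :: l, a, a', b', ha, ha', hb, h => by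
    obtain ⟨a2, rfl⟩ := Nat.exists_eq_add_of_lt ha
    obtain ⟨a3, rfl⟩ := Nat.exists_eq_add_of_lt ha'
    simp only [Nat.zero_add] at *
    simp only [rrun_trueS, Bool.and_eq_true, decide_eq_true_eq] at h ⊢
    simp only [Nat.mul_succ] at hb ⊢
    exact ⟨by omega, h.2⟩
  | false :: l, a, a', b', ha, ha', hb, h => by
    simp only [rrun_false] at h ⊢
    exact rrun_G1 l (a+1) (a'+1) b' (by omega) (by omega)
      (by simp only [Nat.mul_succ] at hb ⊢; omega) h

lemma rrun_G2 (l : List Bool) (a b : ℕ) (ha : 0 < a) (hb : b < q * a)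
    (h : rrun q 0 0 l = true) : rrun q b a l = true := by
  obtain ⟨a2, rfl⟩ := Nat.exists_eq_add_of_lt ha
  simp only [Nat.zero_add] at *
  match l with
  | [] => simp only [rrun_nilS, decide_eq_true_eq]; exact hb
  | true :: l =>
    simp only [rrun_true0, Nat.zero_add] at h
    simp only [rrun_trueS, Bool.and_eq_true, decide_eq_true_eq]
    exact ⟨hb, h⟩
  | false :: l =>
    simp only [rrun_false] at h ⊢
    exact rrun_G1 l 1 (a2 + 2) b (by omega) (by omega)
      (by simp only [Nat.mul_succ] at hb ⊢; omega) h

lemma rrun_SAT : ∀ (l : List Bool) (b a b' a' : ℕ), 0 < a → 0 < a' →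
    b < q * a → b' < q * a' → rrun q b a l = rrun q b' a' l
  | [], b, a, b', a', ha, ha', hb, hb' => by
    obtain ⟨a2, rfl⟩ := Nat.exists_eq_add_of_lt ha
    obtain ⟨a3, rfl⟩ := Nat.exists_eq_add_of_lt ha'
    simp only [Nat.zero_add] at *
    simp only [rrun_nilS, decide_eq_true hb, decide_eq_true hb']
  | true :: l, b, a, b', a', ha, ha', hb, hb' => by
    obtain ⟨a2, rfl⟩ := Nat.exists_eq_add_of_lt ha
    obtain ⟨a3, rfl⟩ := Nat.exists_eq_add_of_lt ha'
    simp only [Nat.zero_add] at *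
    simp only [rrun_trueS, decide_eq_true hb, decide_eq_true hb']
  | false :: l, b, a, b', a', ha, ha', hb, hb' => by
    simp only [rrun_false]
    exact rrun_SAT l b (a+1) b' (a'+1) (by omega) (by omega)
      (by simp only [Nat.mul_succ] at hb ⊢; omega)
      (by simp only [Nat.mul_succ] at hb' ⊢; omega)

lemma rrun_SHIFT : ∀ (l : List Bool) (b a : ℕ), q ≤ b → 0 < a →
    rrun q b (a+1) l = rrun q (b-q) a l
  | [], b, a, hqb, ha => by
    obtain ⟨a2, rfl⟩ := Nat.exists_eq_add_of_lt ha
    simp only [Nat.zero_add, rrun_nilS]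
    rw [decide_eq_decide]
    simp only [Nat.mul_succ]
    omega
  | true :: l, b, a, hqb, ha => by
    obtain ⟨a2, rfl⟩ := Nat.exists_eq_add_of_lt ha
    simp only [Nat.zero_add, rrun_trueS]
    congr 1
    rw [decide_eq_decide]
    simp only [Nat.mul_succ]
    omega
  | false :: l, b, a, hqb, ha => by
    simp only [rrun_false]
    exact rrun_SHIFT l b (a+1) hqb (by omega)

lemma rrun_PEQ (hq : 1 ≤ q) : ∀ (l : List Bool) (b : ℕ), b < q →
    rrun q b 1 l = rrun q 0 0 l
  | [], b, hb => by
    simp only [rrun_nilS, rrun_nil0, decide_eq_true_eq]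
    omega
  | true :: l, b, hb => by
    simp only [rrun_trueS, rrun_true0, Nat.zero_add, decide_eq_true (by omega : b < q * 1),
      Bool.true_and]
  | false :: l, b, hb => by
    simp only [rrun_false]
    exact rrun_SAT l b 2 0 1 (by omega) (by omega) (by omega) (by omega)


lemma rrun_ones (q : ℕ) : ∀ (m b : ℕ), rrun q b 0 (List.replicate m true) = true
  | 0, b => rfl
  | m+1, b => by simpa [List.replicate_succ] using rrun_ones q m (b+1)

lemma rrun_C1 : ∀ (m b : ℕ) (l : List Bool),
    rrun q b 0 (List.replicate m true ++ l) = rrun q (b + m) 0 l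
  | 0, b, l => rfl
  | m+1, b, l => by
    simp only [List.replicate_succ, List.cons_append, rrun_true0]
    rw [rrun_C1 m (b+1) l]
    congr 1
    omega

lemma rrun_C2 : ∀ (c b a : ℕ) (l : List Bool),
    rrun q b a (List.replicate c false ++ l) = rrun q b (a + c) l
  | 0, b, a, l => rfl
  | c+1, b, a, l => by
    simp only [List.replicate_succ, List.cons_append, rrun_false]
    rw [rrun_C2 c b (a+1) l]
    congr 1
    omega

end BoolLemmas

/-- Forward direction: `QDecreasing` implies the checker accepts the reverse. -/
lemma qdec_to_rrun {q : ℕ} {w : List Bool} (h : QDecreasing q w) :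
    rrun q 0 0 w.reverse = true := by
  induction h with
  | ones m => rw [List.reverse_replicate]; exact rrun_ones q m 0
  | snoc w a b ha hb hw ih =>
    rw [List.reverse_append, List.reverse_append, List.reverse_replicate,
      List.reverse_replicate, rrun_C1, rrun_C2]
    simp only [Nat.zero_add]
    exact rrun_G2 w.reverse a b ha hb ih

/-- Backward direction. -/
lemma rrun_to_qdec {q : ℕ} : ∀ (l : List Bool) (b a : ℕ), rrun q b a l = true →
    QDecreasing q (l.reverse ++ List.replicate a false ++ List.replicate b true)
  | [], b, 0, _ => by simpa using QDecreasing.ones b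
  | [], b, a+1, h => by
    simp only [rrun_nilS, decide_eq_true_eq] at h
    simpa using QDecreasing.snoc [] (a+1) b (by omega) h (by simpa using QDecreasing.ones 0)
  | true :: l, b, 0, h => by
    simp only [rrun_true0] at h
    have := rrun_to_qdec l (b+1) 0 h
    simp only [List.replicate, List.append_nil] at this ⊢
    simpa [List.reverse_cons, List.append_assoc, List.replicate_succ'] using this
  | true :: l, b, a+1, h => by
    simp only [rrun_trueS, Bool.and_eq_true, decide_eq_true_eq] at h
    have := QDecreasing.snoc (l.reverse ++ [true]) (a+1) b (by omega) h.1 (by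
      have := rrun_to_qdec l 1 0 h.2
      simpa using this)
    simpa [List.reverse_cons, List.append_assoc] using this
  | false :: l, b, a, h => by
    simp only [rrun_false] at h
    have := rrun_to_qdec l b (a+1) h
    simp only [List.reverse_cons, List.append_assoc, List.replicate_succ] at this ⊢
    simpa [List.append_assoc] using this

lemma qdec_iff_rrun {q : ℕ} (w : List Bool) :
    QDecreasing q w ↔ rrun q 0 0 w.reverse = true := by
  constructor
  · exact qdec_to_rrun
  · intro h
    have := rrun_to_qdec w.reverse 0 0 h
    simpa using this

section Counting

instance listFinite (n : ℕ) (P : List Bool → Prop) :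
    Finite {l : List Bool // l.length = n ∧ P l} := by
  have h : {l : List Bool | l.length = n ∧ P l}.Finite :=
    (List.finite_length_eq Bool n).subset (fun l hl => hl.1)
  exact h.to_subtype

/-- Split a cardinality by the head of the list. -/
lemma card_split (n : ℕ) (P : List Bool → Prop) :
    Nat.card {l : List Bool // l.length = n + 1 ∧ P l} =
      Nat.card {l : List Bool // l.length = n ∧ P (true :: l)} +
      Nat.card {l : List Bool // l.length = n ∧ P (false :: l)} := by
  rw [← Nat.card_sum]
  apply Nat.card_congr
  refine ⟨fun x => ?_, fun x => ?_, ?_, ?_⟩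
  · rcases x with ⟨l, hl⟩
    match l, hl with
    | true :: l, hl => exact Sum.inl ⟨l, by simpa using hl⟩
    | false :: l, hl => exact Sum.inr ⟨l, by simpa using hl⟩
  · rcases x with ⟨l, hl⟩ | ⟨l, hl⟩
    · exact ⟨true :: l, by simpa using hl⟩
    · exact ⟨false :: l, by simpa using hl⟩
  · rintro ⟨l, hl⟩
    match l, hl with
    | true :: l, hl => rfl
    | false :: l, hl => rfl
  · rintro (⟨l, hl⟩ | ⟨l, hl⟩) <;> rfl

lemma card_of_false (n : ℕ) {P : List Bool → Prop} (h : ∀ l, l.length = n → ¬ P l) :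
    Nat.card {l : List Bool // l.length = n ∧ P l} = 0 := by
  have : IsEmpty {l : List Bool // l.length = n ∧ P l} := ⟨fun x => h x.1 x.2.1 x.2.2⟩
  simp

lemma card_len_zero {P : List Bool → Prop} (h : P []) :
    Nat.card {l : List Bool // l.length = 0 ∧ P l} = 1 := by
  have : Unique {l : List Bool // l.length = 0 ∧ P l} := by
    refine ⟨⟨⟨[], rfl, h⟩⟩, ?_⟩
    rintro ⟨l, hl, _⟩
    have : l = [] := List.length_eq_zero_iff.mp hl
    subst this; rfl
  exact Nat.card_unique

/-- Number of (reversed) words of length `n` accepted from state `(b, 0)`. -/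
noncomputable def vv (q b n : ℕ) : ℕ := Nat.card {l : List Bool // l.length = n ∧ rrun q b 0 l = true}

/-- Number of (reversed) words of length `n` accepted from state `(b, 1)`. -/
noncomputable def zz (q b n : ℕ) : ℕ := Nat.card {l : List Bool // l.length = n ∧ rrun q b 1 l = true}

lemma vv_zero (q b : ℕ) : vv q b 0 = 1 := card_len_zero (by simp)

lemma zz_zero (q b : ℕ) : zz q b 0 = if b < q then 1 else 0 := by
  unfold zz
  by_cases hb : b < q
  · rw [if_pos hb]
    exact card_len_zero (by simp; omega)
  · rw [if_neg hb]
    apply card_of_false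
    intro l hlen hP
    have : l = [] := List.length_eq_zero_iff.mp hlen
    subst this
    simp only [rrun_nilS, decide_eq_true_eq, Nat.mul_one] at hP
    omega

lemma vv_succ (q b n : ℕ) : vv q b (n+1) = vv q (b+1) n + zz q b n := by
  unfold vv zz
  rw [card_split]
  congr 1 <;> apply Nat.card_congr <;> apply Equiv.subtypeEquivRight <;> intro l <;> simp

lemma zz_succ_ge (q b n : ℕ) (hb : q ≤ b) : zz q b (n+1) = zz q (b-q) n := by
  unfold zz
  rw [card_split]
  have h1 : Nat.card {l : List Bool // l.length = n ∧ rrun q b 1 (true :: l) = true} = 0 := by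
    apply card_of_false
    intro l _ hl
    simp only [rrun_trueS, Bool.and_eq_true, decide_eq_true_eq, Nat.mul_one] at hl
    omega
  rw [h1, Nat.zero_add]
  apply Nat.card_congr; apply Equiv.subtypeEquivRight; intro l
  rw [rrun_false, rrun_SHIFT l b 1 hb (by omega)]

lemma zz_lt (q b n : ℕ) (hq : 1 ≤ q) (hb : b < q) : zz q b n = vv q 0 n := by
  unfold vv zz
  apply Nat.card_congr; apply Equiv.subtypeEquivRight; intro l
  rw [rrun_PEQ hq l b hb]

/-- Closed form for `zz` in terms of `vv`. -/
lemma zz_eq (q : ℕ) (hq : 1 ≤ q) : ∀ (b n : ℕ),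
    zz q b n = if b / q ≤ n then vv q 0 (n - b / q) else 0 := by
  intro b
  induction b using Nat.strong_induction_on with
  | _ b ih =>
    intro n
    by_cases hb : b < q
    · rw [Nat.div_eq_of_lt hb]
      simpa using zz_lt q b n hq hb
    · push_neg at hb
      have h0 : b - q + q = b := by omega
      have hd : b / q = (b - q) / q + 1 := by
        conv_lhs => rw [← h0]
        rw [Nat.add_div_right _ (by omega)]
      have h1 : 1 ≤ b / q := (Nat.one_le_div_iff (by omega)).mpr hb
      cases n with
      | zero =>
        rw [zz_zero, if_neg (by omega), if_neg (by omega)]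
      | succ n =>
        rw [zz_succ_ge q b n hb, ih (b - q) (by omega) n, hd]
        by_cases hc : (b - q) / q ≤ n
        · rw [if_pos hc, if_pos (by omega)]
          congr 1
          omega
        · rw [if_neg hc, if_neg (by omega)]

/-- Unrolled recurrence for `vv`. -/
lemma vv_unroll (q : ℕ) : ∀ (n b : ℕ),
    vv q b n = 1 + ∑ i ∈ Finset.range n, zz q (b + i) (n - 1 - i) := by
  intro n
  induction n with
  | zero => intro b; simp [vv_zero]
  | succ n ih =>
    intro b
    rw [vv_succ, ih (b+1), Finset.sum_range_succ']
    simp only [Nat.add_zero, Nat.sub_zero, Nat.succ_sub_one]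
    have : ∀ i ∈ Finset.range n, zz q (b + 1 + i) (n - 1 - i) = zz q (b + (i+1)) (n - (i+1)) := by
      intro i hi
      congr 1 <;> omega
    rw [Finset.sum_congr rfl this]
    omega

/-- The master combinatorial recurrence. -/
lemma vv_master (q : ℕ) (hq : 1 ≤ q) (n : ℕ) :
    vv q 0 n = 1 + ∑ i ∈ Finset.range n,
      (if i + i / q ≤ n - 1 then vv q 0 (n - 1 - i - i / q) else 0) := by
  rw [vv_unroll]
  congr 1
  apply Finset.sum_congr rfl
  intro i hi
  simp only [Finset.mem_range] at hi
  rw [Nat.zero_add, zz_eq q hq i (n - 1 - i)]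
  by_cases hc : i / q ≤ n - 1 - i
  · rw [if_pos hc, if_pos (by omega)]
  · rw [if_neg hc, if_neg (by omega)]

end Counting

section Fib

lemma genFib_rec (k N : ℕ) (hk : 1 ≤ k) (hN : k ≤ N) :
    genFib k N = ∑ i ∈ Finset.range k, genFib k (N - (i + 1)) := by
  rw [genFib]
  rw [if_neg (by omega), if_neg (by omega), if_neg (by omega)]

lemma genFib_small (k m : ℕ) (h : m + 1 < k) : genFib k m = 0 := by
  rw [genFib, if_pos h]

lemma genFib_one (k m : ℕ) (h : m + 1 = k) : genFib k m = 1 := by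
  rw [genFib, if_neg (by omega), if_pos h]

variable (q : ℕ)

/-- `F n = f_{n+q+1, q+1}`. -/
noncomputable def FF (n : ℕ) : ℕ := genFib (q + 1) (n + q + 1)

lemma FF_rec (n : ℕ) : FF q n = ∑ i ∈ Finset.range (q + 1), genFib (q + 1) (n + q - i) := by
  rw [FF, genFib_rec (q+1) (n+q+1) (by omega) (by omega)]
  apply Finset.sum_congr rfl
  intro i hi
  congr 1
  simp only [Finset.mem_range] at hi
  omega

lemma FF_rec' (n : ℕ) (hn : q + 1 ≤ n) :
    FF q n = ∑ i ∈ Finset.range q, FF q (n - 1 - i) + FF q (n - (q + 1)) := by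
  rw [FF_rec, Finset.sum_range_succ]
  congr 1
  · apply Finset.sum_congr rfl
    intro i hi
    simp only [Finset.mem_range] at hi
    rw [FF]
    congr 1
    omega
  · rw [FF]
    congr 1
    omega

/-- Two-term recurrence: `F (n+1) + g n = 2 * F n`. -/
lemma FF_two (n : ℕ) : FF q (n + 1) + genFib (q + 1) n = 2 * FF q n := by
  have e1 : FF q (n + 1) = FF q n + ∑ i ∈ Finset.range q, genFib (q+1) (n + q - i) := by
    rw [FF_rec, Finset.sum_range_succ']
    have : ∀ i ∈ Finset.range q, genFib (q+1) (n + 1 + q - (i+1)) = genFib (q+1) (n + q - i) := by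
      intro i hi; congr 1; omega
    rw [Finset.sum_congr rfl this]
    have h0 : genFib (q+1) (n + 1 + q - 0) = FF q n := by rw [FF]; congr 1; omega
    rw [h0]; omega
  have e2 : FF q n = ∑ i ∈ Finset.range q, genFib (q+1) (n + q - i) + genFib (q+1) n := by
    rw [FF_rec, Finset.sum_range_succ]
    congr 1
    congr 1
    omega
  omega

lemma FF_zero : FF q 0 = 1 := by
  rw [FF_rec]
  rw [Finset.sum_range_succ']
  have h1 : ∀ i ∈ Finset.range q, genFib (q+1) (0 + q - (i+1)) = 0 := by
    intro i hi
    simp only [Finset.mem_range] at hi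
    exact genFib_small _ _ (by omega)
  rw [Finset.sum_eq_zero h1, genFib_one (q+1) (0 + q - 0) (by omega)]

lemma FF_small (n : ℕ) (hn : n ≤ q) : FF q n = 1 + ∑ m ∈ Finset.range n, FF q m := by
  induction n with
  | zero => simpa using FF_zero q
  | succ n ih =>
    have h1 : genFib (q+1) n = 0 := genFib_small _ _ (by omega)
    have h2 := FF_two q n
    have h3 := ih (by omega)
    rw [Finset.sum_range_succ]
    omega

/-- The master arithmetic identity for `F`. -/
lemma FF_master (hq : 1 ≤ q) : ∀ n, FF q n = 1 + ∑ i ∈ Finset.range n,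
    (if i + i / q ≤ n - 1 then FF q (n - 1 - i - i / q) else 0) := by
  intro n
  induction n using Nat.strong_induction_on with
  | _ n ih =>
    by_cases hn : n ≤ q
    · -- small case: all i < n ≤ q have i / q = 0 and condition true
      have h1 : ∀ i ∈ Finset.range n, (if i + i / q ≤ n - 1 then FF q (n - 1 - i - i / q) else 0)
          = FF q (n - 1 - i) := by
        intro i hi
        simp only [Finset.mem_range] at hi
        rw [Nat.div_eq_of_lt (by omega), if_pos (by omega)]
        congr 1
      rw [Finset.sum_congr rfl h1, Finset.sum_range_reflect]
      exact FF_small q n hn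
    · push_neg at hn
      have hn' : q + 1 ≤ n := hn
      -- split the range at q
      have hsplit : n = q + (n - q) := by omega
      rw [hsplit, Finset.sum_range_add, ← hsplit]
      have hhead : ∀ i ∈ Finset.range q,
          (if i + i / q ≤ n - 1 then FF q (n - 1 - i - i / q) else 0) = FF q (n - 1 - i) := by
        intro i hi
        simp only [Finset.mem_range] at hi
        rw [Nat.div_eq_of_lt (by omega), if_pos (by omega)]
        congr 1
      rw [Finset.sum_congr rfl hhead]
      -- tail
      have htail1 : n - q = (n - (q+1)) + 1 := by omega
      have htail : ∑ i ∈ Finset.range (n - q),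
          (if (q + i) + (q + i) / q ≤ n - 1 then FF q (n - 1 - (q + i) - (q + i) / q) else 0)
          = ∑ i ∈ Finset.range (n - (q+1)),
            (if i + i / q ≤ (n - (q+1)) - 1 then FF q ((n - (q+1)) - 1 - i - i / q) else 0) := by
        rw [htail1, Finset.sum_range_succ]
        have hlast : ¬ ((q + (n - (q+1))) + (q + (n - (q+1))) / q ≤ n - 1) := by
          have : 1 ≤ (q + (n - (q+1))) / q := (Nat.one_le_div_iff (by omega)).mpr (by omega)
          omega
        rw [if_neg hlast, Nat.add_zero]
        apply Finset.sum_congr rfl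
        intro i hi
        simp only [Finset.mem_range] at hi
        have hdiv : (q + i) / q = i / q + 1 := by
          rw [Nat.add_comm q i, Nat.add_div_right _ (by omega)]
        rw [hdiv]
        by_cases hc : i + i / q ≤ (n - (q+1)) - 1
        · rw [if_pos (by omega), if_pos hc]
          congr 1
          omega
        · rw [if_neg (by omega), if_neg hc]
      rw [htail]
      have hIH := ih (n - (q+1)) (by omega)
      rw [FF_rec' q n hn']
      omega

end Fib

lemma vv_eq_FF (q : ℕ) (hq : 1 ≤ q) : ∀ n, vv q 0 n = FF q n := by
  intro n
  induction n using Nat.strong_induction_on with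
  | _ n ih =>
    rw [vv_master q hq n, FF_master q hq n]
    congr 1
    apply Finset.sum_congr rfl
    intro i hi
    simp only [Finset.mem_range] at hi
    by_cases hc : i + i / q ≤ n - 1
    · have hlt : n - 1 - i - i / q < n := by
        generalize i / q = k
        omega
      rw [if_pos hc, if_pos hc, ih (n - 1 - i - i / q) hlt]
    · rw [if_neg hc, if_neg hc]

theorem qdecreasing_card (n q : ℕ) (hq : 1 ≤ q) :
    Nat.card {w : List Bool // w.length = n ∧ QDecreasing q w} =
      genFib (q + 1) (n + q + 1) := by
  have h1 : Nat.card {w : List Bool // w.length = n ∧ QDecreasing q w} = vv q 0 n := by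
    apply Nat.card_congr
    refine ⟨fun x => ⟨x.1.reverse, by simpa [qdec_iff_rrun] using x.2⟩,
      fun x => ⟨x.1.reverse, ?_, ?_⟩, fun x => by simp, fun x => by simp⟩
    · simpa using x.2.1
    · rw [qdec_iff_rrun]
      simpa using x.2.2
  rw [h1, vv_eq_FF q hq n]
  rfl
end

section
/- For q ≥ 1, call a word of the form 0^a 1^b a q-prime factor if a = ⌊b/q⌋ + 1; then the generating function of q-prime factors, counted by length n and number k of ones, is S_q(x,y) = x(1 − (xy)^q) / ((xy − 1)(x^{q+1} y^q − 1)), i.e., the number of q-prime factors of length n with exactly k ones equals the coefficient of x^n y^k in this rational function. -/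
/-- A `q`-prime factor: a word `0^a 1^b` with `a = ⌊b/q⌋ + 1`. -/
def IsQPrime (q : ℕ) (w : List Bool) : Prop :=
  ∃ a b : ℕ, a = b / q + 1 ∧ w = List.replicate a false ++ List.replicate b true

/-- The bivariate formal power series over `ℤ` with coefficient `c n k`
on `x^n y^k`. -/
noncomputable def mkSeries (c : ℕ → ℕ → ℤ) : MvPowerSeries (Fin 2) ℤ :=
  fun d => c (d 0) (d 1)

noncomputable def Xv : MvPowerSeries (Fin 2) ℤ := MvPowerSeries.X 0
noncomputable def Yv : MvPowerSeries (Fin 2) ℤ := MvPowerSeries.X 1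

open MvPowerSeries Finsupp Finset

/-- The coefficient function: 1 iff `n = k + k/q + 1`. -/
def cf (q n k : ℕ) : ℤ := if n = k + k / q + 1 then 1 else 0

/-- The "remainder polynomial" coefficient function. -/
def pf (q n k : ℕ) : ℤ := if n = k + 1 ∧ k < q then 1 else 0

lemma mem_char (q n k : ℕ) (w : List Bool) :
    (w.length = n ∧ w.count true = k ∧ IsQPrime q w) ↔
      n = k + k / q + 1 ∧ w = List.replicate (k / q + 1) false ++ List.replicate k true := by
  constructor
  · rintro ⟨hl, hc, a, b, ha, rfl⟩
    simp [List.count_append, List.count_replicate] at hc hl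
    subst hc
    constructor
    · omega
    · rw [ha]
  · rintro ⟨hn, rfl⟩
    refine ⟨?_, ?_, ⟨k / q + 1, k, rfl, rfl⟩⟩ <;>
      simp [List.count_append, List.count_replicate] <;> omega

lemma card_eq (q n k : ℕ) :
    (Nat.card {w : List Bool // w.length = n ∧ w.count true = k ∧ IsQPrime q w} : ℤ)
      = cf q n k := by
  by_cases h : n = k + k / q + 1
  · rw [cf, if_pos h]
    norm_cast
    rw [Nat.card_eq_one_iff_exists]
    refine ⟨⟨List.replicate (k / q + 1) false ++ List.replicate k true, ?_⟩, ?_⟩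
    · exact (mem_char q n k _).2 ⟨h, rfl⟩
    · rintro ⟨w, hw⟩
      have := ((mem_char q n k w).1 hw).2
      exact Subtype.ext this
  · rw [cf, if_neg h]
    have : IsEmpty {w : List Bool // w.length = n ∧ w.count true = k ∧ IsQPrime q w} :=
      ⟨fun ⟨w, hw⟩ => h ((mem_char q n k w).1 hw).1⟩
    simp

lemma finsupp_eq (d : Fin 2 →₀ ℕ) (a b : ℕ) :
    d = Finsupp.single 0 a + Finsupp.single 1 b ↔ d 0 = a ∧ d 1 = b := by
  constructor
  · rintro rfl; simp [Finsupp.single_apply]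
  · rintro ⟨h0, h1⟩
    ext i
    fin_cases i <;> simp [Finsupp.single_apply, h0, h1]

lemma finsupp_le (d : Fin 2 →₀ ℕ) (a b : ℕ) :
    Finsupp.single 0 a + Finsupp.single 1 b ≤ d ↔ a ≤ d 0 ∧ b ≤ d 1 := by
  rw [Finsupp.le_def]
  rw [Fin.forall_fin_two]
  simp [Finsupp.single_apply]

lemma arith (q n k : ℕ) (hq : 1 ≤ q) :
    (if q + 1 ≤ n ∧ q ≤ k then cf q (n - (q + 1)) (k - q) else 0) - cf q n k
      = -(pf q n k) := by
  unfold cf pf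
  rcases le_or_gt q k with hk | hk
  · have h1 : k / q = (k - q) / q + 1 := Nat.div_eq_sub_div hq hk
    rw [h1]
    generalize (k - q) / q = m
    split_ifs <;> omega
  · have h0 : k / q = 0 := Nat.div_eq_of_lt hk
    rw [h0]
    have h0' : (k - q) / q = 0 := by
      apply Nat.div_eq_of_lt; omega
    rw [h0']
    split_ifs <;> omega

lemma hT (q : ℕ) : Xv ^ (q + 1) * Yv ^ q
    = MvPowerSeries.monomial (Finsupp.single 0 (q + 1) + Finsupp.single 1 q) 1 := by
  rw [Xv, Yv, MvPowerSeries.X_pow_eq, MvPowerSeries.X_pow_eq,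
    MvPowerSeries.monomial_mul_monomial, one_mul]

lemma hXr (r : ℕ) : Xv * (Xv * Yv) ^ r
    = MvPowerSeries.monomial (Finsupp.single 0 (r + 1) + Finsupp.single 1 r) 1 := by
  have h : Xv * (Xv * Yv) ^ r = Xv ^ (r + 1) * Yv ^ r := by ring
  rw [h, Xv, Yv, MvPowerSeries.X_pow_eq, MvPowerSeries.X_pow_eq,
    MvPowerSeries.monomial_mul_monomial, one_mul]

lemma coeff_mk (c : ℕ → ℕ → ℤ) (d : Fin 2 →₀ ℕ) :
    MvPowerSeries.coeff d (mkSeries c) = c (d 0) (d 1) := rfl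

lemma L1 (q : ℕ) (hq : 1 ≤ q) :
    mkSeries (cf q) * (Xv ^ (q + 1) * Yv ^ q - 1) = -(mkSeries (pf q)) := by
  apply MvPowerSeries.ext
  intro d
  have e0 : ((d - (Finsupp.single 0 (q + 1) + Finsupp.single 1 q) : Fin 2 →₀ ℕ)) 0 = d 0 - (q + 1) := by
    rw [Finsupp.tsub_apply]; simp [Finsupp.single_apply]
  have e1 : ((d - (Finsupp.single 0 (q + 1) + Finsupp.single 1 q) : Fin 2 →₀ ℕ)) 1 = d 1 - q := by
    rw [Finsupp.tsub_apply]; simp [Finsupp.single_apply]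
  rw [hT, mul_sub, mul_one, map_sub, map_neg, MvPowerSeries.coeff_mul_monomial]
  simp only [coeff_mk, finsupp_le, e0, e1, mul_one]
  exact arith q (d 0) (d 1) hq

lemma L2 (q : ℕ) :
    Xv * ∑ r ∈ Finset.range q, (Xv * Yv) ^ r = mkSeries (pf q) := by
  rw [Finset.mul_sum]
  apply MvPowerSeries.ext
  intro d
  rw [map_sum]
  have step : ∀ r ∈ Finset.range q,
      MvPowerSeries.coeff d (Xv * (Xv * Yv) ^ r)
        = if r = d 1 then (if d 0 = d 1 + 1 then (1 : ℤ) else 0) else 0 := by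
    intro r _
    rw [hXr, MvPowerSeries.coeff_monomial]
    by_cases h : d = Finsupp.single 0 (r + 1) + Finsupp.single 1 r
    · rw [if_pos h]
      obtain ⟨h0, h1⟩ := (finsupp_eq d _ _).1 h
      rw [if_pos (by omega), if_pos (by omega)]
    · rw [if_neg h]
      rw [finsupp_eq] at h
      split_ifs with h1 h2
      · exact absurd ⟨by omega, by omega⟩ h
      · rfl
      · rfl
  rw [Finset.sum_congr rfl step, Finset.sum_ite_eq', coeff_mk, pf]
  simp only [Finset.mem_range]
  split_ifs <;> first | rfl | omega

theorem qprime_generating_function (q : ℕ) (hq : 1 ≤ q) :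
    mkSeries (fun n k =>
        (Nat.card {w : List Bool // w.length = n ∧ w.count true = k ∧ IsQPrime q w} : ℤ)) *
      ((Xv * Yv - 1) * (Xv ^ (q + 1) * Yv ^ q - 1)) =
    Xv * (1 - (Xv * Yv) ^ q) := by
  have hS : mkSeries (fun n k =>
      (Nat.card {w : List Bool // w.length = n ∧ w.count true = k ∧ IsQPrime q w} : ℤ))
      = mkSeries (cf q) :=
    congrArg mkSeries (funext fun n => funext fun k => card_eq q n k)
  rw [hS]
  have h1 : mkSeries (cf q) * (Xv ^ (q + 1) * Yv ^ q - 1)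
      = -(Xv * ∑ r ∈ Finset.range q, (Xv * Yv) ^ r) := by
    rw [L1 q hq, L2 q]
  have h2 := geom_sum_mul (Xv * Yv) q
  linear_combination (Xv * Yv - 1) * h1 - Xv * h2
end

section
/- For q ≥ 1, the number of q-decreasing words of length n with exactly k ones is the coefficient of x^n y^k in W_q(x,y) = (1 − x^{q+1} y^q) / (1 − xy − x + x^{q+2} y^{q+1}). -/
/-!
Let `W`, `G`, `S` be the generating functions of the `q`-decreasing words, of those that stay
`q`-decreasing when a `1` is appended, and of the remaining (saturated) ones, and `V` that of the
`q`-decreasing words not ending in `0`. Removing the last letter gives `W = x W + V`,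
`V = 1 + x y G`, and `W = G + S` holds by definition. A saturated word ends in a maximal block
`0^a 1^(q a - 1)`: for `a = 1` it is `v 0 1^(q-1)` with `v` counted by `V`, and for `a ≥ 2` it
arises from a saturated word with last block `0^(a-1) 1^(q(a-1)-1)` by inserting `0 1^q` before
its trailing ones. Hence `S = x^q y^(q-1) V + x^(q+1) y^q S`, and eliminating `V`, `G`, `S` gives
the identity.
-/

open List

namespace List

variable {α : Type*}

theorem getLast?_append_replicate_of_pos (l : List α) (c : α) {n : ℕ} (hn : 0 < n) :
    (l ++ replicate n c).getLast? = some c := by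
  simp [getLast?_append, getLast?_replicate, hn.ne']

theorem append_replicate_inj {c : α} {l l' : List α} {n n' : ℕ}
    (hl : l.getLast? ≠ some c) (hl' : l'.getLast? ≠ some c)
    (h : l ++ replicate n c = l' ++ replicate n' c) : l = l' ∧ n = n' := by
  induction n generalizing n' with
  | zero =>
    cases n' with
    | zero => simpa using h
    | succ n' =>
      rw [replicate_zero, append_nil] at h
      exact absurd (h ▸ getLast?_append_replicate_of_pos l' c n'.succ_pos) hl
  | succ n ih =>
    cases n' with
    | zero =>
      rw [replicate_zero, append_nil] at h
      exact absurd (h ▸ getLast?_append_replicate_of_pos l c n.succ_pos) hl'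
    | succ n' =>
      rw [replicate_succ', replicate_succ', ← append_assoc, ← append_assoc] at h
      simpa using ih (append_inj_left' h rfl)

theorem append_replicate_replicate_inj {v v' : List Bool} {a a' b b' : ℕ}
    (hv : v.getLast? ≠ some false) (hv' : v'.getLast? ≠ some false) (ha : 0 < a) (ha' : 0 < a')
    (h : v ++ replicate a false ++ replicate b true = v' ++ replicate a' false ++ replicate b' true) :
    v = v' ∧ a = a' ∧ b = b' := by
  obtain ⟨hzeros, rfl⟩ := append_replicate_inj
    (by simp [getLast?_append_replicate_of_pos _ _ ha])
    (by simp [getLast?_append_replicate_of_pos _ _ ha']) h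
  obtain ⟨rfl, rfl⟩ := append_replicate_inj hv hv' hzeros
  exact ⟨rfl, rfl, rfl⟩

variable {p : α → Bool} {c : α} {l : List α}

theorem rtakeWhile_append_replicate (hc : p c) (hl : l.rtakeWhile p = []) (n : ℕ) :
    (l ++ replicate n c).rtakeWhile p = replicate n c := by
  induction n with
  | zero => simpa using hl
  | succ n ih => rw [replicate_succ', ← append_assoc, rtakeWhile_concat_pos _ _ _ hc, ih]

theorem rdropWhile_append_replicate (hc : p c) (hl : l.rdropWhile p = l) (n : ℕ) :
    (l ++ replicate n c).rdropWhile p = l := by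
  induction n with
  | zero => simpa using hl
  | succ n ih => rw [replicate_succ', ← append_assoc, rdropWhile_concat_pos _ _ _ hc, ih]

end List

namespace QDecreasing

variable {q : ℕ} {w : List Bool}

theorem eq_replicate_or_eq_block (h : QDecreasing q w) :
    (∃ m, w = replicate m true) ∨
      ∃ v a b, v.getLast? ≠ some false ∧ 0 < a ∧ b < q * a ∧ QDecreasing q v ∧
        w = v ++ replicate a false ++ replicate b true := by
  induction h with
  | ones m => exact Or.inl ⟨m, rfl⟩
  | snoc w a b ha hb hw ih =>
    right
    rcases ih with ⟨m, rfl⟩ | ⟨v, a', b', hv, ha', -, hQv, rfl⟩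
    · exact ⟨replicate m true, a, b, by simp [getLast?_replicate], ha, hb, hw, rfl⟩
    · cases b' with
      | zero =>
        refine ⟨v, a' + a, b, hv, by omega, by nlinarith, hQv, ?_⟩
        rw [replicate_zero, append_nil, append_assoc v, replicate_append_replicate]
      | succ b' =>
        exact ⟨_, a, b, by simp [getLast?_append_replicate_of_pos _ _ b'.succ_pos], ha, hb, hw, rfl⟩

theorem append_block_iff {v : List Bool} {a b : ℕ} (hv : v.getLast? ≠ some false) (ha : 0 < a) :
    QDecreasing q (v ++ replicate a false ++ replicate b true) ↔ QDecreasing q v ∧ b < q * a := by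
  refine ⟨fun h => ?_, fun h => snoc v a b ha h.2 h.1⟩
  rcases h.eq_replicate_or_eq_block with ⟨m, hm⟩ | ⟨v', a', b', hv', ha', hb', hQ, he⟩
  · have : false ∈ replicate m true := hm ▸ by simp [ha.ne']
    simp at this
  · obtain ⟨rfl, rfl, rfl⟩ := append_replicate_replicate_inj hv hv' ha ha' he
    exact ⟨hQ, hb'⟩

theorem of_concat {x : Bool} (h : QDecreasing q (w ++ [x])) : QDecreasing q w := by
  rcases h.eq_replicate_or_eq_block with ⟨m, hm⟩ | ⟨v, a, b, hv, ha, hb, hQ, he⟩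
  · have hw : w = replicate w.length true :=
      eq_replicate_iff.2 ⟨rfl, fun y hy => eq_of_mem_replicate (hm ▸ mem_append_left [x] hy)⟩
    exact hw ▸ ones _
  · cases b with
    | zero =>
      obtain ⟨a, rfl⟩ := Nat.exists_eq_add_one_of_ne_zero ha.ne'
      rw [replicate_zero, append_nil, replicate_succ', ← append_assoc] at he
      obtain rfl := append_inj_left' he rfl
      rcases Nat.eq_zero_or_pos a with rfl | ha
      · simpa using hQ
      · simpa using snoc v a 0 ha (by nlinarith) hQ
    | succ b =>
      rw [replicate_succ', ← append_assoc] at he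
      obtain rfl := append_inj_left' he rfl
      exact snoc v a b ha (by omega) hQ

theorem append_false (hq : 0 < q) (h : QDecreasing q w) : QDecreasing q (w ++ [false]) := by
  simpa using snoc w 1 0 one_pos (by simpa) h

end QDecreasing

def Saturated (q : ℕ) (w : List Bool) : Prop :=
  QDecreasing q w ∧ ¬ QDecreasing q (w ++ [true])

theorem saturated_iff {q : ℕ} {w : List Bool} :
    Saturated q w ↔ ∃ v a b, v.getLast? ≠ some false ∧ 0 < a ∧ b + 1 = q * a ∧
      QDecreasing q v ∧ w = v ++ replicate a false ++ replicate b true := by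
  have concat_true (l : List Bool) (b : ℕ) :
      l ++ replicate b true ++ [true] = l ++ replicate (b + 1) true := by
    rw [replicate_succ', append_assoc]
  constructor
  · rintro ⟨hw, hw1⟩
    rcases hw.eq_replicate_or_eq_block with ⟨m, rfl⟩ | ⟨v, a, b, hv, ha, hb, hQ, rfl⟩
    · exact absurd (by simpa [← replicate_succ'] using QDecreasing.ones (q := q) (m + 1)) hw1
    · refine ⟨v, a, b, hv, ha, ?_, hQ, rfl⟩
      by_contra hne
      exact hw1 (concat_true _ b ▸ QDecreasing.snoc v a (b + 1) ha (by omega) hQ)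
  · rintro ⟨v, a, b, hv, ha, hb, hQ, rfl⟩
    refine ⟨QDecreasing.snoc v a b ha (by omega) hQ, fun h => ?_⟩
    rw [concat_true] at h
    have := ((QDecreasing.append_block_iff hv ha).1 h).2
    omega

def growLastBlock (q : ℕ) (w : List Bool) : List Bool :=
  w.rdropWhile id ++ false :: replicate q true ++ w.rtakeWhile id

section GrowLastBlock

variable {q : ℕ}

theorem growLastBlock_append_block (v : List Bool) {a : ℕ} (b : ℕ) (ha : 0 < a) :
    growLastBlock q (v ++ replicate a false ++ replicate b true) =
      v ++ replicate (a + 1) false ++ replicate (b + q) true := by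
  obtain ⟨a, rfl⟩ := Nat.exists_eq_add_one_of_ne_zero ha.ne'
  have hv : v ++ replicate (a + 1) false = v ++ replicate a false ++ [false] := by
    rw [replicate_succ', append_assoc]
  rw [growLastBlock, hv, rtakeWhile_append_replicate rfl (rtakeWhile_concat_neg _ _ _ (by simp)),
    rdropWhile_append_replicate rfl (rdropWhile_concat_neg _ _ _ (by simp))]
  simp [replicate_succ', add_comm b]

theorem length_growLastBlock (w : List Bool) :
    (growLastBlock q w).length = w.length + (q + 1) := by
  conv_rhs => rw [← rdropWhile_append_rtakeWhile (p := id) (l := w)]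
  simp only [growLastBlock, length_append, length_cons, length_replicate]
  omega

theorem count_growLastBlock (w : List Bool) :
    (growLastBlock q w).count true = w.count true + q := by
  conv_rhs => rw [← rdropWhile_append_rtakeWhile (p := id) (l := w)]
  simp [growLastBlock, count_append, -rdropWhile_append_rtakeWhile]
  omega

theorem injOn_growLastBlock : Set.InjOn (growLastBlock q) {w | Saturated q w} := by
  intro w₁ hw₁ w₂ hw₂ h
  obtain ⟨v₁, a₁, b₁, hv₁, ha₁, -, -, rfl⟩ := saturated_iff.1 hw₁
  obtain ⟨v₂, a₂, b₂, hv₂, ha₂, -, -, rfl⟩ := saturated_iff.1 hw₂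
  rw [growLastBlock_append_block _ _ ha₁, growLastBlock_append_block _ _ ha₂] at h
  obtain ⟨rfl, ha, hb⟩ := append_replicate_replicate_inj hv₁ hv₂ (by omega) (by omega) h
  obtain ⟨rfl, rfl⟩ : a₁ = a₂ ∧ b₁ = b₂ := ⟨by omega, by omega⟩
  rfl

theorem setOf_saturated_eq (hq : 0 < q) :
    {w | Saturated q w} =
      (· ++ false :: replicate (q - 1) true) '' {w | QDecreasing q w ∧ w.getLast? ≠ some false} ∪
        growLastBlock q '' {w | Saturated q w} := by
  have hblock (v : List Bool) :
      v ++ false :: replicate (q - 1) true = v ++ replicate 1 false ++ replicate (q - 1) true := by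
    simp
  ext w
  constructor
  · intro hw
    obtain ⟨v, a, b, hv, ha, hb, hQ, rfl⟩ := saturated_iff.1 hw
    obtain rfl | ⟨a, rfl⟩ : a = 1 ∨ ∃ a', a = a' + 2 := by
      rcases a with _ | _ | a <;> simp_all
    · exact Or.inl ⟨v, ⟨hQ, hv⟩, by dsimp only; rw [hblock]; congr; omega⟩
    · have hb2 : b + 1 = q * a + 2 * q := by rw [hb]; ring
      have hb' : b - q + 1 = q * (a + 1) := by rw [mul_add]; omega
      refine Or.inr ⟨_, saturated_iff.2 ⟨v, a + 1, b - q, hv, a.add_one_pos, hb', hQ, rfl⟩, ?_⟩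
      rw [growLastBlock_append_block _ _ a.add_one_pos]
      congr 2
      omega
  · rintro (⟨v, ⟨hQ, hv⟩, rfl⟩ | ⟨w, hw, rfl⟩)
    · exact saturated_iff.2 ⟨v, 1, q - 1, hv, one_pos, by omega, hQ, hblock v⟩
    · obtain ⟨v, a, b, hv, ha, hb, hQ, rfl⟩ := saturated_iff.1 hw
      rw [growLastBlock_append_block _ _ ha]
      exact saturated_iff.2 ⟨v, a + 1, b + q, hv, a.add_one_pos, by rw [mul_add]; omega, hQ, rfl⟩

theorem disjoint_image_append_image_growLastBlock :
    Disjoint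
      ((· ++ false :: replicate (q - 1) true) '' {w | QDecreasing q w ∧ w.getLast? ≠ some false})
      (growLastBlock q '' {w | Saturated q w}) := by
  refine Set.disjoint_left.2 ?_
  rintro _ ⟨v, ⟨-, hv⟩, rfl⟩ ⟨w, hw, hgrow⟩
  obtain ⟨v', a, b, hv', ha, -, -, rfl⟩ := saturated_iff.1 hw
  dsimp only at hgrow
  rw [growLastBlock_append_block _ _ ha,
    show v ++ false :: replicate (q - 1) true = v ++ replicate 1 false ++ replicate (q - 1) true
      by simp] at hgrow
  have := (append_replicate_replicate_inj hv' hv a.add_one_pos one_pos hgrow).2.1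
  omega

end GrowLastBlock

def wordSlice (S : Set (List Bool)) (n k : ℕ) : Set (List Bool) :=
  {w | w.length = n ∧ w.count true = k ∧ w ∈ S}

noncomputable def wordGF (S : Set (List Bool)) : MvPowerSeries (Fin 2) ℤ :=
  mkSeries fun n k => Nat.card {w : List Bool // w.length = n ∧ w.count true = k ∧ w ∈ S}

theorem wordSlice_finite (S : Set (List Bool)) (n k : ℕ) : (wordSlice S n k).Finite :=
  (List.finite_length_eq Bool n).subset fun _ hw => hw.1

theorem coeff_wordGF (S : Set (List Bool)) (d : Fin 2 →₀ ℕ) :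
    MvPowerSeries.coeff d (wordGF S) = (wordSlice S (d 0) (d 1)).ncard :=
  congrArg Nat.cast (Nat.card_coe_set_eq (wordSlice S (d 0) (d 1)))

theorem wordGF_union {S T : Set (List Bool)} (h : Disjoint S T) :
    wordGF (S ∪ T) = wordGF S + wordGF T := by
  ext d
  have hslice : wordSlice (S ∪ T) (d 0) (d 1) =
      wordSlice S (d 0) (d 1) ∪ wordSlice T (d 0) (d 1) := by
    ext w
    simp only [wordSlice, Set.mem_union, Set.mem_ofPred_eq]
    tauto
  have hdisj : Disjoint (wordSlice S (d 0) (d 1)) (wordSlice T (d 0) (d 1)) :=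
    h.mono (fun _ hw => hw.2.2) (fun _ hw => hw.2.2)
  rw [map_add, coeff_wordGF, coeff_wordGF, coeff_wordGF, hslice,
    Set.ncard_union_eq hdisj (wordSlice_finite _ _ _) (wordSlice_finite _ _ _), Nat.cast_add]

theorem wordGF_singleton_nil : wordGF {[]} = 1 := by
  ext d
  rw [coeff_wordGF, MvPowerSeries.coeff_one]
  by_cases hd : d = 0
  · have : wordSlice {[]} 0 0 = {[]} := by
      ext w
      simp +contextual [wordSlice]
    simp [hd, this]
  · have : wordSlice {[]} (d 0) (d 1) = ∅ := by
      ext w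
      simp only [wordSlice, Set.mem_ofPred_eq, Set.mem_singleton_iff, Set.mem_empty_iff_false,
        iff_false]
      rintro ⟨h0, h1, rfl⟩
      exact hd (Finsupp.ext (Fin.forall_fin_two.2 ⟨h0.symm, h1.symm⟩))
    simp [hd, this]

theorem wordGF_image {S : Set (List Bool)} {f : List Bool → List Bool} (i j : ℕ)
    (hf : S.InjOn f) (hlen : ∀ w ∈ S, (f w).length = w.length + i)
    (hcount : ∀ w ∈ S, (f w).count true = w.count true + j) :
    wordGF (f '' S) = Xv ^ i * Yv ^ j * wordGF S := by
  ext d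
  rw [Xv, Yv, MvPowerSeries.X_pow_eq, MvPowerSeries.X_pow_eq,
    MvPowerSeries.monomial_mul_monomial, MvPowerSeries.coeff_monomial_mul, one_mul,
    coeff_wordGF, coeff_wordGF]
  have hle : Finsupp.single 0 i + Finsupp.single 1 j ≤ d ↔ i ≤ d 0 ∧ j ≤ d 1 := by
    simp [Finsupp.le_def, Fin.forall_fin_two]
  split_ifs with hd
  · obtain ⟨hi, hj⟩ := hle.1 hd
    have hslice : wordSlice (f '' S) (d 0) (d 1) = f '' wordSlice S (d 0 - i) (d 1 - j) := by
      ext u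
      constructor
      · rintro ⟨hl, hc, w, hw, rfl⟩
        have := hlen w hw
        have := hcount w hw
        exact ⟨w, ⟨by omega, by omega, hw⟩, rfl⟩
      · rintro ⟨w, ⟨hl, hc, hw⟩, rfl⟩
        have := hlen w hw
        have := hcount w hw
        exact ⟨by omega, by omega, w, hw, rfl⟩
    rw [hslice, (hf.mono fun _ hw => hw.2.2).ncard_image]
    simp
  · suffices wordSlice (f '' S) (d 0) (d 1) = ∅ by simp [this]
    refine Set.eq_empty_of_forall_notMem ?_
    rintro _ ⟨hl, hc, w, hw, rfl⟩
    have := hlen w hw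
    have := hcount w hw
    exact hd (hle.2 ⟨by omega, by omega⟩)

theorem wordGF_image_append (S : Set (List Bool)) (t : List Bool) :
    wordGF ((· ++ t) '' S) = Xv ^ t.length * Yv ^ t.count true * wordGF S :=
  wordGF_image _ _ (append_left_injective t).injOn (fun _ _ => length_append)
    (fun _ _ => count_append)

section GeneratingFunctions

variable {q : ℕ}

theorem wordGF_qDecreasing (hq : 0 < q) :
    wordGF {w | QDecreasing q w} =
      Xv * wordGF {w | QDecreasing q w} +
        wordGF {w | QDecreasing q w ∧ w.getLast? ≠ some false} := by
  have hset : {w | QDecreasing q w} = (· ++ [false]) '' {w | QDecreasing q w} ∪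
      {w | QDecreasing q w ∧ w.getLast? ≠ some false} := by
    ext w
    constructor
    · intro hw
      rcases eq_nil_or_concat' w with rfl | ⟨u, x, rfl⟩
      · exact Or.inr ⟨hw, by simp⟩
      · cases x
        · exact Or.inl ⟨u, hw.of_concat, rfl⟩
        · exact Or.inr ⟨hw, by simp⟩
    · rintro (⟨u, hu, rfl⟩ | ⟨hw, -⟩)
      · exact QDecreasing.append_false hq hu
      · exact hw
  have hdisj : Disjoint ((· ++ [false]) '' {w | QDecreasing q w})
      {w | QDecreasing q w ∧ w.getLast? ≠ some false} := by
    refine Set.disjoint_left.2 ?_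
    rintro _ ⟨u, -, rfl⟩ ⟨-, h⟩
    simp at h
  conv_lhs => rw [hset, wordGF_union hdisj, wordGF_image_append]
  simp

theorem wordGF_qDecreasing_getLast?_ne_false :
    wordGF {w | QDecreasing q w ∧ w.getLast? ≠ some false} =
      1 + Xv * Yv * wordGF {w | QDecreasing q (w ++ [true])} := by
  have hset : {w | QDecreasing q w ∧ w.getLast? ≠ some false} =
      {[]} ∪ (· ++ [true]) '' {w | QDecreasing q (w ++ [true])} := by
    ext w
    constructor
    · rintro ⟨hw, hlast⟩
      rcases eq_nil_or_concat' w with rfl | ⟨u, x, rfl⟩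
      · exact Or.inl rfl
      · cases x
        · simp at hlast
        · exact Or.inr ⟨u, hw, rfl⟩
    · rintro (rfl | ⟨u, hu, rfl⟩)
      · exact ⟨QDecreasing.ones 0, by simp⟩
      · exact ⟨hu, by simp⟩
  have hdisj : Disjoint {[]} ((· ++ [true]) '' {w | QDecreasing q (w ++ [true])}) := by
    refine Set.disjoint_singleton_left.2 ?_
    rintro ⟨u, -, h⟩
    simp at h
  rw [hset, wordGF_union hdisj, wordGF_singleton_nil, wordGF_image_append]
  simp

theorem wordGF_qDecreasing_eq_add_saturated :
    wordGF {w | QDecreasing q w} =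
      wordGF {w | QDecreasing q (w ++ [true])} + wordGF {w | Saturated q w} := by
  have hset : {w | QDecreasing q w} =
      {w | QDecreasing q (w ++ [true])} ∪ {w | Saturated q w} := by
    ext w
    by_cases h : QDecreasing q (w ++ [true])
    · simp [Saturated, h, h.of_concat]
    · simp [Saturated, h]
  rw [hset, wordGF_union (Set.disjoint_left.2 fun _ h1 h2 => h2.2 h1)]

theorem wordGF_saturated (hq : 0 < q) :
    wordGF {w | Saturated q w} =
      Xv ^ q * Yv ^ (q - 1) * wordGF {w | QDecreasing q w ∧ w.getLast? ≠ some false} +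
        Xv ^ (q + 1) * Yv ^ q * wordGF {w | Saturated q w} := by
  conv_lhs =>
    rw [setOf_saturated_eq hq, wordGF_union disjoint_image_append_image_growLastBlock,
      wordGF_image_append, wordGF_image _ _ injOn_growLastBlock
        (fun w _ => length_growLastBlock w) (fun w _ => count_growLastBlock w)]
  simp [Nat.sub_add_cancel hq]

end GeneratingFunctions

theorem qdecreasing_bivariate_gf (q : ℕ) (hq : 1 ≤ q) :
    mkSeries (fun n k =>
        (Nat.card {w : List Bool // w.length = n ∧ w.count true = k ∧ QDecreasing q w} : ℤ)) *
      (1 - Xv * Yv - Xv + Xv ^ (q + 2) * Yv ^ (q + 1)) =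
    1 - Xv ^ (q + 1) * Yv ^ q := by
  obtain ⟨p, rfl⟩ : ∃ p, q = p + 1 := ⟨q - 1, by omega⟩
  have hW := wordGF_qDecreasing p.add_one_pos
  have hV := wordGF_qDecreasing_getLast?_ne_false (q := p + 1)
  have hGS := wordGF_qDecreasing_eq_add_saturated (q := p + 1)
  have hS := wordGF_saturated p.add_one_pos
  rw [Nat.add_sub_cancel] at hS
  change wordGF {w | QDecreasing (p + 1) w} * _ = _
  linear_combination hW + (1 - Xv ^ (p + 2) * Yv ^ (p + 1)) * hV
    + (Xv ^ (p + 3) * Yv ^ (p + 2) - Xv * Yv) * hGS - Xv * Yv * hS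
end

section
/- For every n ≥ 0 and q ≥ 1, the difference between the number of q-decreasing words of length n with an even number of 1s and the number with an odd number of 1s belongs to {−1, 0, 1}. -/
inductive St where
  | S : St
  | Z : ℕ → St
  | O : ℕ → St

def stp (q : ℕ) : St → Bool → Option St
  | .S, true => some .S
  | .S, false => some (.Z 1)
  | .Z a, false => some (.Z (a+1))
  | .Z a, true => if 2 ≤ q * a then some (.O (q * a - 2)) else none
  | .O _, false => some (.Z 1)
  | .O r, true => if 1 ≤ r then some (.O (r - 1)) else none

def runA (q : ℕ) (s : Option St) (l : List Bool) : Option St :=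
  l.foldl (fun t c => t.bind fun u => stp q u c) s

@[simp] lemma runA_nil (q s) : runA q s [] = s := rfl

@[simp] lemma runA_cons (q s c l) :
    runA q s (c :: l) = runA q (s.bind fun u => stp q u c) l := rfl

lemma runA_append (q s l₁ l₂) :
    runA q s (l₁ ++ l₂) = runA q (runA q s l₁) l₂ := List.foldl_append ..

@[simp] lemma runA_none (q l) : runA q none l = none := by
  induction l with
  | nil => rfl
  | cons c l ih => simpa using ih

lemma runA_ones (q m) : runA q (some .S) (List.replicate m true) = some .S := by
  induction m with
  | zero => rfl
  | succ m ih => simpa [List.replicate_succ, stp] using ih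

lemma runA_zeros_Z (q k a) :
    runA q (some (.Z k)) (List.replicate a false) = some (.Z (k + a)) := by
  induction a generalizing k with
  | zero => simp
  | succ a ih => simp [List.replicate_succ, stp, ih, Nat.add_assoc, Nat.add_comm 1 a]

lemma runA_zeros_notZ (q t a) (ht : t = .S ∨ ∃ r, t = .O r) (ha : 1 ≤ a) :
    runA q (some t) (List.replicate a false) = some (.Z a) := by
  obtain ⟨a, rfl⟩ := Nat.exists_eq_add_of_le ha
  rw [Nat.add_comm, List.replicate_succ, runA_cons]
  rcases ht with rfl | ⟨r, rfl⟩ <;>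
    simp [stp, runA_zeros_Z, Nat.add_comm 1 a]

lemma runA_onesO (q r b) (h : b ≤ r) :
    runA q (some (.O r)) (List.replicate b true) = some (.O (r - b)) := by
  induction b generalizing r with
  | zero => simp
  | succ b ih =>
    obtain ⟨r, rfl⟩ := Nat.exists_eq_add_of_le (Nat.le_of_succ_le h)
    rw [List.replicate_succ, runA_cons]
    have h1 : 1 ≤ b + r := by omega
    simp only [stp, Option.bind_some]
    rw [if_pos h1]
    rw [ih (b + r - 1) (by omega)]
    congr 2
    omega

lemma runA_ones_Z (q A b) (h : b < q * A) :
    (runA q (some (.Z A)) (List.replicate b true)).isSome := by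
  cases b with
  | zero => simp
  | succ b =>
    rw [List.replicate_succ, runA_cons]
    have h2 : 2 ≤ q * A := by omega
    simp only [stp, Option.bind_some, if_pos h2]
    rw [runA_onesO q _ b (by omega)]
    simp

lemma runA_ones_Z' (q A b) (hq : 1 ≤ q) (hA : 1 ≤ A)
    (h : (runA q (some (.Z A)) (List.replicate b true)).isSome) : b < q * A := by
  cases b with
  | zero => exact Nat.lt_of_lt_of_le (by omega) (Nat.le_mul_of_pos_right q hA |>.trans (le_refl _)) |>.trans_le (le_refl _) |>.trans_le (le_refl _)
  | succ b =>
    rw [List.replicate_succ, runA_cons] at h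
    by_cases h2 : 2 ≤ q * A
    · simp only [stp, Option.bind_some, if_pos h2] at h
      -- from O (q*A-2), b ones succeed → b ≤ q*A-2
      have : ∀ r b, (runA q (some (.O r)) (List.replicate b true)).isSome → b ≤ r := by
        intro r b
        induction b generalizing r with
        | zero => intro _; omega
        | succ b ih =>
          intro hh
          rw [List.replicate_succ, runA_cons] at hh
          by_cases h1 : 1 ≤ r
          · simp only [stp, Option.bind_some, if_pos h1] at hh
            have := ih _ hh
            omega
          · simp [stp, if_neg h1] at hh
      have := this _ _ h
      omega
    · simp [stp, if_neg h2] at h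

def accA (q : ℕ) (w : List Bool) : Bool := (runA q (some .S) w).isSome

lemma qdec_to_acc {q w} (h : QDecreasing q w) : accA q w = true := by
  induction h with
  | ones m => simp [accA, runA_ones]
  | snoc w a b ha hb hw ih =>
    simp only [accA] at ih ⊢
    obtain ⟨t, ht⟩ := Option.isSome_iff_exists.mp ih
    rw [runA_append, runA_append, ht]
    rcases t with _ | k | r
    · rw [runA_zeros_notZ q _ a (Or.inl rfl) ha]
      exact runA_ones_Z q a b hb
    · rw [runA_zeros_Z]
      exact runA_ones_Z q _ b (lt_of_lt_of_le hb (by nlinarith))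
    · rw [runA_zeros_notZ q _ a (Or.inr ⟨r, rfl⟩) ha]
      exact runA_ones_Z q a b hb

lemma acc_prefix {q u v} (h : accA q (u ++ v) = true) : (runA q (some .S) u).isSome := by
  simp only [accA] at h
  rw [runA_append] at h
  rcases ho : runA q (some St.S) u with _ | t
  · rw [ho, runA_none] at h; simp at h
  · simp

lemma run_after_true {q u t} (hu : u = [] ∨ ∃ u' , u = u' ++ [true])
    (h : runA q (some .S) u = some t) : t = .S ∨ ∃ r, t = .O r := by
  rcases hu with rfl | ⟨u', rfl⟩
  · simp at h; exact Or.inl h.symm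
  · rw [runA_append] at h
    rcases ho : runA q (some St.S) u' with _ | t'
    · rw [ho] at h; simp at h
    · rw [ho] at h
      rcases t' with _ | k | r <;> simp only [stp, runA_cons, Option.bind_some, runA_nil] at h
      · obtain rfl : St.S = t := by injection h
        exact Or.inl rfl
      · by_cases h2 : 2 ≤ q * k
        · rw [if_pos h2] at h
          obtain rfl : St.O (q * k - 2) = t := by injection h
          exact Or.inr ⟨_, rfl⟩
        · rw [if_neg h2] at h; simp at h
      · by_cases h1 : 1 ≤ r
        · rw [if_pos h1] at h
          obtain rfl : St.O (r - 1) = t := by injection h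
          exact Or.inr ⟨_, rfl⟩
        · rw [if_neg h1] at h; simp at h

lemma ends_true_of_dropWhile (l : List Bool) :
    l.dropWhile (fun c => !c) = [] ∨
      ∃ u', (l.dropWhile (fun c => !c)).reverse = u' ++ [true] := by
  rcases h : l.dropWhile (fun c => !c) with _ | ⟨c, t⟩
  · exact Or.inl rfl
  · right
    have hc := List.head?_dropWhile_not (fun c : Bool => !c) l
    rw [h] at hc
    simp at hc
    subst hc
    exact ⟨t.reverse, by simp⟩

lemma decompose {w : List Bool} (hw : false ∈ w) :
    ∃ u a b, 1 ≤ a ∧ w = u ++ List.replicate a false ++ List.replicate b true ∧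
      (u = [] ∨ ∃ u', u = u' ++ [true]) := by
  set r := w.reverse with hr
  set t1 := r.takeWhile (fun c => c) with ht1
  set r2 := r.dropWhile (fun c => c) with hr2
  set t2 := r2.takeWhile (fun c => !c) with ht2
  set u' := r2.dropWhile (fun c => !c) with hu'
  have e1 : t1 = List.replicate t1.length true := by
    apply List.eq_replicate_of_mem
    intro b hb
    have := List.mem_takeWhile_imp hb
    simpa using this
  have e2 : t2 = List.replicate t2.length false := by
    apply List.eq_replicate_of_mem
    intro b hb
    have := List.mem_takeWhile_imp hb
    simpa using this
  have hrsplit : r = t1 ++ (t2 ++ u') := by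
    rw [ht2, hu', List.takeWhile_append_dropWhile, ht1, hr2,
      List.takeWhile_append_dropWhile]
  have hr2ne : r2 ≠ [] := by
    intro hnil
    have hall : ∀ x ∈ r, (fun c : Bool => c) x = true := by
      simpa using List.dropWhile_eq_nil_iff.mp hnil
    have hf : (false : Bool) ∈ r := by rw [hr]; simpa using hw
    simpa using hall false hf
  have ha : 1 ≤ t2.length := by
    rcases hh : r2 with _ | ⟨c, t⟩
    · exact absurd hh hr2ne
    · have hc := List.head?_dropWhile_not (fun c : Bool => c) r
      rw [← hr2, hh] at hc
      simp at hc
      subst hc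
      rw [ht2, hh]
      simp
  refine ⟨u'.reverse, t2.length, t1.length, ha, ?_, ?_⟩
  · have : w = r.reverse := by rw [hr, List.reverse_reverse]
    rw [this, hrsplit]
    rw [List.reverse_append, List.reverse_append]
    rw [e2, e1]
    simp [List.reverse_replicate]
  · rw [hu']
    rcases ends_true_of_dropWhile r2 with h0 | hend
    · left; rw [h0]; rfl
    · exact Or.inr hend

lemma acc_to_qdec {q} (hq : 1 ≤ q) : ∀ w, accA q w = true → QDecreasing q w := by
  have main : ∀ n w, w.length = n → accA q w = true → QDecreasing q w := by
    intro n
    induction n using Nat.strong_induction_on with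
    | _ n ih =>
      intro w hlen hacc
      by_cases hfw : false ∈ w
      · obtain ⟨u, a, b, ha, rfl, hu⟩ := decompose hfw
        have hacc' : accA q (u ++ (List.replicate a false ++ List.replicate b true)) = true := by
          rw [← List.append_assoc]; exact hacc
        have haccu := acc_prefix hacc'
        obtain ⟨t, ht⟩ := Option.isSome_iff_exists.mp haccu
        have htS := run_after_true hu ht
        have hrun : runA q (some .S) (u ++ List.replicate a false ++ List.replicate b true)
            = runA q (some (.Z a)) (List.replicate b true) := by
          rw [runA_append, runA_append, ht, runA_zeros_notZ q t a htS ha]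
        have hb : b < q * a := by
          apply runA_ones_Z' q a b hq ha
          rw [← hrun]
          exact hacc
        have hlt : u.length < n := by
          rw [← hlen]
          simp [List.length_append, List.length_replicate]
          omega
        exact QDecreasing.snoc u a b ha hb (ih u.length hlt u rfl (by simpa [accA] using haccu))
      · have hall : ∀ x ∈ w, x = true := by
          intro x hx
          cases x
          · exact absurd hx hfw
          · rfl
        rw [List.eq_replicate_of_mem hall]
        exact QDecreasing.ones _
  exact fun w => main w.length w rfl

lemma qdec_iff_acc {q} (hq : 1 ≤ q) (w : List Bool) :
    QDecreasing q w ↔ accA q w = true :=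
  ⟨qdec_to_acc, acc_to_qdec hq w⟩

def allW : ℕ → Finset (List Bool)
  | 0 => {[]}
  | n+1 => ((allW n).image (List.cons true)) ∪ ((allW n).image (List.cons false))

lemma mem_allW {n w} : w ∈ allW n ↔ w.length = n := by
  induction n generalizing w with
  | zero => simp [allW, List.length_eq_zero_iff]
  | succ n ih =>
    simp only [allW, Finset.mem_union, Finset.mem_image]
    constructor
    · rintro (⟨v, hv, rfl⟩ | ⟨v, hv, rfl⟩) <;> simp [ih.mp hv]
    · intro hl
      rcases w with _ | ⟨c, v⟩
      · simp at hl
      · have hv : v ∈ allW n := ih.mpr (by simpa using hl)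
        cases c
        · exact Or.inr ⟨v, hv, rfl⟩
        · exact Or.inl ⟨v, hv, rfl⟩

def SCnt (q : ℕ) (s : Option St) (n : ℕ) : ℤ :=
  ∑ w ∈ allW n, if (runA q s w).isSome then (-1 : ℤ) ^ (w.count true) else 0

lemma SCnt_none (q n) : SCnt q none n = 0 := by
  unfold SCnt
  refine Finset.sum_eq_zero fun w _ => by simp

lemma SCnt_zero (q s) : SCnt q s 0 = if s.isSome then 1 else 0 := by
  unfold SCnt
  simp [allW]

lemma SCnt_succ (q s n) :
    SCnt q s (n + 1) =
      SCnt q (s.bind fun u => stp q u false) n - SCnt q (s.bind fun u => stp q u true) n := by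
  unfold SCnt
  rw [show allW (n+1) = ((allW n).image (List.cons true)) ∪ ((allW n).image (List.cons false)) from rfl]
  rw [Finset.sum_union]
  · rw [Finset.sum_image (by intro a _ b _ h; injection h),
      Finset.sum_image (by intro a _ b _ h; injection h)]
    have h1 : ∀ w ∈ allW n,
        (if (runA q s (true :: w)).isSome then (-1 : ℤ) ^ ((true :: w).count true) else 0)
        = -(if (runA q (s.bind fun u => stp q u true) w).isSome then (-1 : ℤ) ^ (w.count true) else 0) := by
      intro w _
      rw [runA_cons]
      by_cases h : (runA q (s.bind fun u => stp q u true) w).isSome <;>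
        simp [h, List.count_cons, pow_succ]
    have h2 : ∀ w ∈ allW n,
        (if (runA q s (false :: w)).isSome then (-1 : ℤ) ^ ((false :: w).count true) else 0)
        = (if (runA q (s.bind fun u => stp q u false) w).isSome then (-1 : ℤ) ^ (w.count true) else 0) := by
      intro w _
      rw [runA_cons]
      simp [List.count_cons]
    rw [Finset.sum_congr rfl h1, Finset.sum_congr rfl h2, Finset.sum_neg_distrib]
    ring
  · rw [Finset.disjoint_left]
    rintro x hx hx'
    simp only [Finset.mem_image] at hx hx'
    obtain ⟨a, _, rfl⟩ := hx
    obtain ⟨b, _, hb⟩ := hx'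
    injection hb with h1 _
    simp at h1

noncomputable def Ef (q : ℕ) (t : ℤ) : ℤ :=
  if 0 ≤ t ∧ ((q : ℤ) + 2) ∣ t then ((-1 : ℤ) ^ q) ^ ((t / ((q : ℤ) + 2)).toNat) else 0

lemma Ef_neg (q : ℕ) {t : ℤ} (ht : t < 0) : Ef q t = 0 := by
  unfold Ef
  rw [if_neg]
  rintro ⟨h, -⟩
  omega

lemma Ef_zero (q : ℕ) : Ef q 0 = 1 := by
  unfold Ef
  rw [if_pos ⟨le_refl 0, dvd_zero _⟩]
  simp

lemma Ef_rec (q : ℕ) (t : ℤ) (ht : 1 ≤ t) :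
    Ef q t = (-1 : ℤ) ^ q * Ef q (t - ((q : ℤ) + 2)) := by
  by_cases hd : ((q : ℤ) + 2) ∣ t
  · obtain ⟨k, rfl⟩ := hd
    have hq2 : (0 : ℤ) < (q : ℤ) + 2 := by omega
    have hk : 1 ≤ k := by nlinarith
    have h1 : ((q : ℤ) + 2) * k - ((q : ℤ) + 2) = ((q : ℤ) + 2) * (k - 1) := by ring
    unfold Ef
    rw [h1, if_pos ⟨by nlinarith, Dvd.intro _ rfl⟩, if_pos ⟨by nlinarith, Dvd.intro _ rfl⟩]
    rw [Int.mul_ediv_cancel_left _ (by omega), Int.mul_ediv_cancel_left _ (by omega)]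
    have hk1 : k.toNat = (k - 1).toNat + 1 := by omega
    rw [hk1, pow_succ]
    ring
  · have hd' : ¬ ((q : ℤ) + 2) ∣ (t - ((q : ℤ) + 2)) := by
      intro hdd
      exact hd (by have := dvd_add hdd (dvd_refl ((q : ℤ) + 2)); simpa using this)
    unfold Ef
    rw [if_neg (by tauto), if_neg (by tauto)]
    ring

lemma neg_one_pm (n : ℕ) : (-1 : ℤ) ^ n = 1 ∨ (-1 : ℤ) ^ n = -1 := by
  rcases Nat.even_or_odd n with h | h
  · exact Or.inl h.neg_one_pow
  · exact Or.inr h.neg_one_pow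

lemma Ef_mem (q : ℕ) (t : ℤ) : Ef q t = -1 ∨ Ef q t = 0 ∨ Ef q t = 1 := by
  unfold Ef
  split
  · rw [← pow_mul]
    rcases neg_one_pm (q * (t / ((q : ℤ) + 2)).toNat) with h | h <;> rw [h] <;> tauto
  · tauto

noncomputable def Sf (q : ℕ) (t : ℤ) : ℤ :=
  Ef q t - (-1 : ℤ) ^ q * Ef q (t - ((q : ℤ) + 1))

noncomputable def Zf (q : ℕ) (a : ℕ) (t : ℤ) : ℤ :=
  Ef q t - ((-1 : ℤ) ^ q) ^ a * Ef q (t - (q : ℤ) * (a : ℤ))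

noncomputable def Of (q : ℕ) (r : ℕ) (t : ℤ) : ℤ :=
  Sf q t + (-1 : ℤ) ^ r * Sf q (t - (r : ℤ) - 1)

lemma Sf_neg (q : ℕ) {t : ℤ} (ht : t < 0) : Sf q t = 0 := by
  unfold Sf
  rw [Ef_neg q ht, Ef_neg q (by omega)]
  ring

lemma id1 (q : ℕ) (t : ℤ) (ht : 1 ≤ t) : Sf q t = Zf q 1 (t - 1) - Sf q (t - 1) := by
  unfold Sf Zf
  rw [Ef_rec q t ht]
  push_cast
  ring_nf

lemma id2 (q a : ℕ) (h2 : 2 ≤ q * a) (t : ℤ) (ht : 1 ≤ t) :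
    Zf q a t = Zf q (a + 1) (t - 1) - Of q (q * a - 2) (t - 1) := by
  have hpow : ((-1 : ℤ) ^ q) ^ a = (-1 : ℤ) ^ (q * a - 2) := by
    rw [← pow_mul]
    have h : q * a = (q * a - 2) + 2 := by omega
    rw [h, pow_add]
    norm_num
  have hcast : ((q * a - 2 : ℕ) : ℤ) = (q : ℤ) * (a : ℤ) - 2 := by
    push_cast [Nat.cast_sub h2]
    ring
  unfold Zf Of Sf
  rw [hcast, ← hpow, Ef_rec q t ht]
  push_cast
  ring_nf

lemma id2' (q a : ℕ) (hq : 1 ≤ q) (ha : 1 ≤ a) (h2 : ¬ 2 ≤ q * a) (t : ℤ) (ht : 1 ≤ t) :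
    Zf q a t = Zf q (a + 1) (t - 1) := by
  have hq1 : q = 1 := by nlinarith
  have ha1 : a = 1 := by nlinarith
  subst hq1; subst ha1
  unfold Zf
  rw [Ef_rec 1 t ht]
  push_cast
  ring_nf

lemma id3' (q r : ℕ) (hr : 1 ≤ r) (t : ℤ) (ht : 1 ≤ t) :
    Of q r t = Zf q 1 (t - 1) - Of q (r - 1) (t - 1) := by
  have hpow : (-1 : ℤ) ^ r = -(-1 : ℤ) ^ (r - 1) := by
    cases r with
    | zero => omega
    | succ n => rw [pow_succ]; simp
  have hcast : ((r - 1 : ℕ) : ℤ) = (r : ℤ) - 1 := by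
    push_cast [Nat.cast_sub hr]
    ring
  have h1 := id1 q t ht
  unfold Of
  rw [hcast, hpow, h1]
  have harg : t - (r : ℤ) - 1 = (t - 1) - ((r : ℤ) - 1) - 1 := by ring
  rw [harg]
  ring

lemma id3'' (q : ℕ) (t : ℤ) (ht : 1 ≤ t) : Of q 0 t = Zf q 1 (t - 1) := by
  have h1 := id1 q t ht
  unfold Of
  rw [h1]
  norm_num

lemma SCnt_eq (q : ℕ) (hq : 1 ≤ q) : ∀ m : ℕ,
    SCnt q (some .S) m = Sf q m ∧
    (∀ a, 1 ≤ a → SCnt q (some (.Z a)) m = Zf q a m) ∧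
    (∀ r, SCnt q (some (.O r)) m = Of q r m) := by
  intro m
  induction m with
  | zero =>
    refine ⟨?_, fun a ha => ?_, fun r => ?_⟩
    · rw [SCnt_zero]
      unfold Sf
      simp only [Nat.cast_zero]
      rw [Ef_zero, Ef_neg q (by omega : (0:ℤ) - ((q:ℤ)+1) < 0)]
      simp
    · rw [SCnt_zero]
      unfold Zf
      simp only [Nat.cast_zero]
      have h1 : (1:ℤ) ≤ (q:ℤ) * (a:ℤ) := by
        have : (1:ℤ) ≤ (q:ℤ) := by exact_mod_cast hq
        have : (1:ℤ) ≤ (a:ℤ) := by exact_mod_cast ha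
        nlinarith
      rw [Ef_zero, Ef_neg q (by omega : (0:ℤ) - (q:ℤ)*(a:ℤ) < 0)]
      simp
    · rw [SCnt_zero]
      unfold Of
      simp only [Nat.cast_zero]
      rw [Sf_neg q (by omega : (0:ℤ) - (r:ℤ) - 1 < 0)]
      unfold Sf
      rw [Ef_zero, Ef_neg q (by omega : (0:ℤ) - ((q:ℤ)+1) < 0)]
      simp
  | succ m ih =>
    obtain ⟨ihS, ihZ, ihO⟩ := ih
    refine ⟨?_, fun a ha => ?_, fun r => ?_⟩
    · rw [SCnt_succ]
      have hf : ((some St.S).bind fun u => stp q u false) = some (.Z 1) := rfl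
      have ht : ((some St.S).bind fun u => stp q u true) = some .S := rfl
      rw [hf, ht, ihZ 1 le_rfl, ihS]
      push_cast
      rw [id1 q ((m:ℤ)+1) (by omega)]
      norm_num
    · rw [SCnt_succ]
      have hf : ((some (St.Z a)).bind fun u => stp q u false) = some (.Z (a+1)) := rfl
      by_cases h2 : 2 ≤ q * a
      · have ht : ((some (St.Z a)).bind fun u => stp q u true) = some (.O (q*a-2)) := by
          simp [stp, if_pos h2]
        rw [hf, ht, ihZ (a+1) (by omega), ihO]
        push_cast
        rw [id2 q a h2 ((m:ℤ)+1) (by omega)]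
        norm_num
      · have ht : ((some (St.Z a)).bind fun u => stp q u true) = none := by
          simp [stp, if_neg h2]
        rw [hf, ht, SCnt_none, sub_zero, ihZ (a+1) (by omega)]
        push_cast
        rw [id2' q a hq ha h2 ((m:ℤ)+1) (by omega)]
        norm_num
    · rw [SCnt_succ]
      have hf : ((some (St.O r)).bind fun u => stp q u false) = some (.Z 1) := rfl
      by_cases h1 : 1 ≤ r
      · have ht : ((some (St.O r)).bind fun u => stp q u true) = some (.O (r-1)) := by
          simp [stp, if_pos h1]
        rw [hf, ht, ihZ 1 le_rfl, ihO]
        push_cast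
        rw [id3' q r h1 ((m:ℤ)+1) (by omega)]
        norm_num
      · have hr0 : r = 0 := by omega
        subst hr0
        have ht : ((some (St.O 0)).bind fun u => stp q u true) = none := by
          simp [stp]
        rw [hf, ht, SCnt_none, sub_zero, ihZ 1 le_rfl]
        push_cast
        rw [id3'' q ((m:ℤ)+1) (by omega)]
        norm_num

lemma Sf_mem (q : ℕ) (n : ℕ) : Sf q (n : ℤ) = -1 ∨ Sf q (n : ℤ) = 0 ∨ Sf q (n : ℤ) = 1 := by
  by_cases hd : ((q : ℤ) + 2) ∣ (n : ℤ)
  · have hnd : ¬ ((q : ℤ) + 2) ∣ ((n : ℤ) - ((q : ℤ) + 1)) := by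
      intro h
      have h2 : ((q : ℤ) + 2) ∣ ((q : ℤ) + 1) := by simpa using dvd_sub hd h
      have := Int.le_of_dvd (by omega) h2
      omega
    have hz : Ef q ((n : ℤ) - ((q : ℤ) + 1)) = 0 := by
      unfold Ef
      rw [if_neg (by tauto)]
    unfold Sf
    rw [hz]
    have := Ef_mem q (n : ℤ)
    rcases this with h | h | h <;> rw [h] <;> norm_num
  · have hz : Ef q (n : ℤ) = 0 := by
      unfold Ef
      rw [if_neg (by tauto)]
    unfold Sf
    rw [hz]
    rcases Ef_mem q ((n : ℤ) - ((q : ℤ) + 1)) with h | h | h <;>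
      rcases neg_one_pm q with h' | h' <;> rw [h, h'] <;> norm_num

lemma SCnt_split (q n : ℕ) :
    SCnt q (some .S) n =
      (((allW n).filter fun w => accA q w = true ∧ Even (w.count true)).card : ℤ) -
      (((allW n).filter fun w => accA q w = true ∧ Odd (w.count true)).card : ℤ) := by
  unfold SCnt
  rw [← Finset.sum_boole, ← Finset.sum_boole, ← Finset.sum_sub_distrib]
  refine Finset.sum_congr rfl fun w _ => ?_
  by_cases hA : accA q w = true
  · have hA' : (runA q (some .S) w).isSome = true := hA
    rcases Nat.even_or_odd (w.count true) with he | ho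
    · simp [hA, hA', he, he.neg_one_pow, Nat.not_odd_iff_even.mpr he]
    · simp [hA, hA', ho, ho.neg_one_pow, Nat.not_even_iff_odd.mpr ho]
  · have hA' : (runA q (some .S) w).isSome = false := by
      simpa [accA] using hA
    simp [hA, hA']

lemma card_eq_s8 (q n : ℕ) (hq : 1 ≤ q) (p : ℕ → Prop) [DecidablePred p] :
    Nat.card {w : List Bool // w.length = n ∧ QDecreasing q w ∧ p (w.count true)} =
      ((allW n).filter fun w => accA q w = true ∧ p (w.count true)).card := by
  rw [← Nat.card_eq_finsetCard]
  apply Nat.card_congr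
  apply Equiv.subtypeEquivRight
  intro w
  simp only [Finset.mem_filter, mem_allW, qdec_iff_acc hq]

theorem qdecreasing_parity_condition (n q : ℕ) (hq : 1 ≤ q) :
    (Nat.card {w : List Bool // w.length = n ∧ QDecreasing q w ∧ Even (w.count true)} : ℤ) -
      (Nat.card {w : List Bool // w.length = n ∧ QDecreasing q w ∧ Odd (w.count true)} : ℤ) ∈
      ({-1, 0, 1} : Set ℤ) := by
  have h1 := card_eq_s8 q n hq Even
  have h2 := card_eq_s8 q n hq Odd
  rw [h1, h2, ← SCnt_split q n]
  rw [(SCnt_eq q hq n).1]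
  rcases Sf_mem q n with h | h | h <;> rw [h] <;> simp
end

section
/- For q ≥ 1, the bivariate generating function counting binary words of length n with k ones avoiding 1^{q+1} is B_q(x,y) = y(1 − (xy)^{q+1}) / (y − x y^2 − x y + (xy)^{q+2}). -/
/-- `w` avoids the factor `1^k`, i.e. has no `k` consecutive `1`s. -/
def Avoids (k : ℕ) (w : List Bool) : Prop := ¬ (List.replicate k true <:+: w)

/-!
Let `F`, `E`, `N` be the generating functions of the words avoiding `1^(q+1)`, of those among
them ending in `1^q`, and of the others. Removing the last letter gives `F = 1 + xF + xyN`, since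
an avoiding word can be extended by a `1` exactly when it does not end in `1^q`. An avoiding word
ending in `1^q` is `1^q` itself or `u 0 1^q` with `u` avoiding, so `E = (xy)^q + x^(q+1) y^q F`.
Eliminating `N = F - E` gives `F (1 - x - xy + x (xy)^(q+1)) = 1 - (xy)^(q+1)`, the claim divided
by `y`.
-/

namespace FibonacciWords

open List MvPowerSeries

theorem infix_or_infix_of_infix_append_cons {α : Type*} {l u v : List α} {b : α} (hb : b ∉ l)
    (h : l <:+: u ++ b :: v) : l <:+: u ∨ l <:+: v := by
  rcases infix_append_iff.mp h with h | h | ⟨l₁, l₂, rfl, h₁, h₂⟩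
  · exact .inl h
  · rcases infix_cons_iff.mp h with h | h
    · cases l with
      | nil => exact .inl nil_infix
      | cons x l => exact absurd (by simp [(cons_prefix_cons.mp h).1]) hb
    · exact .inr h
  · cases l₂ with
    | nil => exact .inl (by simpa using h₁.isInfix)
    | cons x l₂ => exact absurd (by simp [(cons_prefix_cons.mp h₂).1]) hb

theorem Avoids.of_infix {k : ℕ} {u w : List Bool} (hw : Avoids k w) (h : u <:+: w) :
    Avoids k u :=
  fun hu => hw (hu.trans h)

theorem Avoids.append_false_cons {k : ℕ} {u v : List Bool} (hu : Avoids k u) (hv : Avoids k v) :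
    Avoids k (u ++ false :: v) :=
  fun h => (infix_or_infix_of_infix_append_cons (by simp) h).elim hu hv

theorem avoids_append_true_iff {m : ℕ} {u : List Bool} :
    Avoids (m + 1) (u ++ [true]) ↔ Avoids (m + 1) u ∧ ¬ replicate m true <:+ u := by
  simp only [Avoids, infix_concat_iff, replicate_succ', suffix_append_self_iff]
  tauto

theorem avoids_replicate_true (m : ℕ) : Avoids (m + 1) (replicate m true) :=
  fun h => by simpa using h.length_le

theorem setOf_avoids_eq (q : ℕ) :
    {w | Avoids (q + 1) w} = {[]} ∪ ((· ++ [false]) '' {w | Avoids (q + 1) w} ∪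
      (· ++ [true]) '' {w | Avoids (q + 1) w ∧ ¬ replicate q true <:+ w}) := by
  ext w
  constructor
  · intro hw
    cases w using List.reverseRecOn with
    | nil => exact .inl rfl
    | append_singleton u b _ =>
      cases b
      · exact .inr (.inl ⟨u, Avoids.of_infix hw infix_append_left, rfl⟩)
      · exact .inr (.inr ⟨u, avoids_append_true_iff.mp hw, rfl⟩)
  · rintro (rfl | ⟨u, hu, rfl⟩ | ⟨u, hu, rfl⟩)
    · simp [Avoids]
    · exact Avoids.append_false_cons hu (by simp [Avoids])
    · exact avoids_append_true_iff.mpr hu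

theorem setOf_avoids_suffix_eq (q : ℕ) :
    {w | Avoids (q + 1) w ∧ replicate q true <:+ w} =
      {replicate q true} ∪ (· ++ false :: replicate q true) '' {w | Avoids (q + 1) w} := by
  ext w
  constructor
  · rintro ⟨hw, s, rfl⟩
    cases s using List.reverseRecOn with
    | nil => exact .inl (nil_append _)
    | append_singleton u b _ =>
      cases b
      · exact .inr ⟨u, Avoids.of_infix hw (by simp [infix_append_left]), by simp⟩
      · exact absurd ⟨u, [], by simp [replicate_succ]⟩ hw
  · rintro (rfl | ⟨u, hu, rfl⟩)
    · exact ⟨avoids_replicate_true q, suffix_rfl⟩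
    · exact ⟨Avoids.append_false_cons hu (avoids_replicate_true q), ⟨u ++ [false], by simp⟩⟩

noncomputable def weight (w : List Bool) : Fin 2 →₀ ℕ :=
  Finsupp.single 0 w.length + Finsupp.single 1 (w.count true)

noncomputable def wordsGF (L : Set (List Bool)) : MvPowerSeries (Fin 2) ℤ :=
  fun d => (L ∩ weight ⁻¹' {d}).ncard

theorem coeff_wordsGF (L : Set (List Bool)) (d : Fin 2 →₀ ℕ) :
    coeff d (wordsGF L) = (L ∩ weight ⁻¹' {d}).ncard :=
  rfl

theorem weight_append (u v : List Bool) : weight (u ++ v) = weight u + weight v := by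
  simp only [weight, length_append, count_append, Finsupp.single_add]
  abel

theorem weight_eq_iff {w : List Bool} {d : Fin 2 →₀ ℕ} :
    weight w = d ↔ w.length = d 0 ∧ w.count true = d 1 := by
  constructor
  · rintro rfl
    simp [weight]
  · rintro ⟨h₀, h₁⟩
    ext i
    fin_cases i <;> simp [weight, h₀, h₁]

theorem finite_weight_preimage (d : Fin 2 →₀ ℕ) : (weight ⁻¹' {d}).Finite :=
  (finite_length_eq Bool (d 0)).subset fun _ hw => (weight_eq_iff.mp hw).1

theorem monomial_weight (w : List Bool) :
    monomial (weight w) (1 : ℤ) = Xv ^ w.length * Yv ^ w.count true := by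
  rw [Xv, Yv, X_pow_eq, X_pow_eq, monomial_mul_monomial, one_mul, weight]

theorem wordsGF_union {L M : Set (List Bool)} (h : Disjoint L M) :
    wordsGF (L ∪ M) = wordsGF L + wordsGF M := by
  ext d
  rw [map_add, coeff_wordsGF, coeff_wordsGF, coeff_wordsGF, Set.union_inter_distrib_right,
    Set.ncard_union_eq (h.mono Set.inter_subset_left Set.inter_subset_left)
      ((finite_weight_preimage d).inter_of_right _) ((finite_weight_preimage d).inter_of_right _)]
  push_cast
  rfl

theorem wordsGF_and_add_wordsGF_and_not (p r : List Bool → Prop) :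
    wordsGF {w | p w ∧ r w} + wordsGF {w | p w ∧ ¬ r w} = wordsGF {w | p w} := by
  have h := wordsGF_union (L := {w | p w} ∩ {w | r w}) (M := {w | p w} ∩ {w | r w}ᶜ)
    (disjoint_compl_right.mono Set.inter_subset_right Set.inter_subset_right)
  rw [Set.inter_union_compl] at h
  exact h.symm

theorem wordsGF_singleton (v : List Bool) :
    wordsGF {v} = Xv ^ v.length * Yv ^ v.count true := by
  ext d
  rw [← monomial_weight, coeff_wordsGF, coeff_monomial]
  split_ifs with h
  · rw [Set.singleton_inter_of_mem (show v ∈ weight ⁻¹' {d} from h.symm), Set.ncard_singleton,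
      Nat.cast_one]
  · rw [Set.singleton_inter_of_notMem (show v ∉ weight ⁻¹' {d} from Ne.symm h), Set.ncard_empty,
      Nat.cast_zero]

theorem wordsGF_image_append_right (L : Set (List Bool)) (v : List Bool) :
    wordsGF ((· ++ v) '' L) = wordsGF L * (Xv ^ v.length * Yv ^ v.count true) := by
  ext d
  rw [← monomial_weight, coeff_mul_monomial, mul_one, coeff_wordsGF, coeff_wordsGF,
    ← Set.image_inter_preimage, Set.ncard_image_of_injective _ (append_left_injective v)]
  split_ifs with h
  · congr 3
    ext u
    simp [weight_append, eq_tsub_iff_add_eq_of_le h]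
  · rw [Set.eq_empty_of_forall_notMem (s := L ∩ _) fun u hu => h ?_, Set.ncard_empty,
      Nat.cast_zero]
    rw [← show weight (u ++ v) = d from hu.2, weight_append]
    exact le_add_self

theorem mkSeries_card_eq_wordsGF (p : List Bool → Prop) :
    mkSeries (fun n k => (Nat.card {w : List Bool // w.length = n ∧ w.count true = k ∧ p w} : ℤ))
      = wordsGF {w | p w} := by
  ext d
  rw [coeff_wordsGF, ← Nat.card_coe_set_eq]
  change (Nat.card {w : List Bool // _} : ℤ) = _
  congr 3
  ext w
  simp only [Set.mem_inter_iff, Set.mem_ofPred_eq, Set.mem_preimage, Set.mem_singleton_iff,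
    weight_eq_iff]
  tauto

theorem wordsGF_setOf_avoids (q : ℕ) :
    wordsGF {w | Avoids (q + 1) w} = 1 + wordsGF {w | Avoids (q + 1) w} * Xv +
      wordsGF {w | Avoids (q + 1) w ∧ ¬ replicate q true <:+ w} * (Xv * Yv) := by
  conv_lhs => rw [setOf_avoids_eq]
  rw [wordsGF_union, wordsGF_union, wordsGF_singleton, wordsGF_image_append_right,
    wordsGF_image_append_right]
  · simp [add_assoc]
  · refine Set.disjoint_left.mpr ?_
    rintro _ ⟨u, -, rfl⟩ ⟨v, -, h⟩
    simpa using (append_inj' h rfl).2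
  · refine Set.disjoint_singleton_left.mpr ?_
    rintro (⟨u, -, h⟩ | ⟨u, -, h⟩) <;> simp at h

theorem wordsGF_setOf_avoids_suffix (q : ℕ) :
    wordsGF {w | Avoids (q + 1) w ∧ replicate q true <:+ w} =
      (Xv * Yv) ^ q + wordsGF {w | Avoids (q + 1) w} * (Xv ^ (q + 1) * Yv ^ q) := by
  rw [setOf_avoids_suffix_eq, wordsGF_union, wordsGF_singleton, wordsGF_image_append_right]
  · simp [mul_pow]
  · refine Set.disjoint_singleton_left.mpr ?_
    rintro ⟨u, -, h⟩
    have hmem : false ∈ u ++ false :: replicate q true := by simp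
    simp [show u ++ false :: replicate q true = replicate q true from h] at hmem

end FibonacciWords

theorem fibonacci_words_bivariate_gf_general (q : ℕ) :
    mkSeries (fun n k =>
        (Nat.card {w : List Bool // w.length = n ∧ w.count true = k ∧ Avoids (q + 1) w} : ℤ)) *
      (Yv - Xv * Yv ^ 2 - Xv * Yv + (Xv * Yv) ^ (q + 2)) =
    Yv * (1 - (Xv * Yv) ^ (q + 1)) := by
  rw [FibonacciWords.mkSeries_card_eq_wordsGF]
  have hF := FibonacciWords.wordsGF_setOf_avoids q
  have hE := FibonacciWords.wordsGF_setOf_avoids_suffix q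
  have hN := FibonacciWords.wordsGF_and_add_wordsGF_and_not (Avoids (q + 1))
    (fun w => List.replicate q true <:+ w)
  linear_combination Yv * hF + Xv * Yv ^ 2 * hN - Xv * Yv ^ 2 * hE

theorem fibonacci_words_bivariate_gf (q : ℕ) (hq : 1 ≤ q) :
    mkSeries (fun n k =>
        (Nat.card {w : List Bool // w.length = n ∧ w.count true = k ∧ Avoids (q + 1) w} : ℤ)) *
      (Yv - Xv * Yv ^ 2 - Xv * Yv + (Xv * Yv) ^ (q + 2)) =
    Yv * (1 - (Xv * Yv) ^ (q + 1)) :=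
  fibonacci_words_bivariate_gf_general q
end

section
/- As n → ∞, the ratio of the total number of 1s to the total number of 0s over all binary words of length n avoiding the factor 11 tends to 2 − φ, where φ = (1+√5)/2; consequently the frequency of 1s in these words tends to (2−φ)/(3−φ). -/
/-- The popularity of the bit `b` among words of length `n` avoiding `11`. -/
noncomputable def fibPop (b : Bool) (n : ℕ) : ℕ :=
  Nat.card {p : List Bool × ℕ //
    p.1.length = n ∧ Avoids 2 p.1 ∧ p.1[p.2]? = some b}

/-- The number of words of length `n` avoiding `11`. -/
noncomputable def fibCount (n : ℕ) : ℕ :=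
  Nat.card {w : List Bool // w.length = n ∧ Avoids 2 w}

/-!
A word of length `n + 2` avoiding `11` is `0 :: w` with `w` of length `n + 1` or `1 :: 0 :: w`
with `w` of length `n`. Hence there are `F (n + 2)` such words, and their total number `T n` of
ones satisfies `T (n + 2) = T (n + 1) + T n + F (n + 2)`, which is solved by
`5 T n + F (n + 1) = (n + 1) (F (n + 2) + F n)`. Since `F n / F (n + 2) → ψ² = 2 - φ`, the
frequency of ones tends to `(3 - φ) / 5 = (2 - φ) / (3 - φ)`, and the ratio of ones to zeros to
`(3 - φ) / (2 + φ) = 2 - φ`.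
-/

open Filter Topology Real goldenRatio

theorem natCard_occurrences_eq_sum_count {α : Type*} [DecidableEq α] (s : Finset (List α))
    (a : α) : Nat.card {p : List α × ℕ // p.1 ∈ s ∧ p.1[p.2]? = some a} = ∑ w ∈ s, w.count a := by
  let e : {p : List α × ℕ // p.1 ∈ s ∧ p.1[p.2]? = some a} ≃
      Σ w : s, {i : Fin w.1.length // w.1.get i = a} :=
    { toFun p := ⟨⟨p.1.1, p.2.1⟩, ⟨⟨p.1.2, (List.getElem?_eq_some_iff.1 p.2.2).1⟩,
        (List.getElem?_eq_some_iff.1 p.2.2).2⟩⟩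
      invFun p := ⟨(p.1.1, p.2.1), p.1.2, List.getElem?_eq_some_iff.2 ⟨p.2.1.2, p.2.2⟩⟩
      left_inv _ := rfl
      right_inv _ := rfl }
  rw [Nat.card_congr e, Nat.card_sigma, ← Finset.sum_coe_sort s]
  refine Fintype.sum_congr _ _ fun w ↦ ?_
  rw [Nat.card_eq_fintype_card, Fintype.card_subtype]
  exact Fin.card_filter_univ_eq_vector_get_eq_count a ⟨w.1, rfl⟩

theorem Filter.Tendsto.div_of_div_add {ι 𝕜 : Type*} [Field 𝕜] [TopologicalSpace 𝕜]
    [IsTopologicalDivisionRing 𝕜] {l : Filter ι} {a b : ι → 𝕜} {x : 𝕜}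
    (h : Tendsto (fun i ↦ a i / (a i + b i)) l (𝓝 x)) (hx : x ≠ 1)
    (hab : ∀ᶠ i in l, a i + b i ≠ 0) :
    Tendsto (fun i ↦ a i / b i) l (𝓝 (x / (1 - x))) := by
  refine (h.div (tendsto_const_nhds.sub h) (sub_ne_zero.2 hx.symm)).congr' ?_
  filter_upwards [hab] with i hi
  rw [Pi.div_apply, one_sub_div hi, add_sub_cancel_left, div_div_div_cancel_right₀ hi]

namespace FibonacciWords

theorem avoids_two_of_length_le_one {w : List Bool} (h : w.length ≤ 1) : Avoids 2 w :=
  fun hw ↦ by simpa using hw.length_le.trans h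

theorem avoids_two_false_cons_iff (w : List Bool) : Avoids 2 (false :: w) ↔ Avoids 2 w := by
  simp [Avoids, List.replicate, List.infix_cons_iff]

theorem not_avoids_two_true_true_cons (w : List Bool) : ¬ Avoids 2 (true :: true :: w) :=
  fun h ↦ h ⟨[], w, rfl⟩

theorem avoids_two_true_false_cons_iff (w : List Bool) :
    Avoids 2 (true :: false :: w) ↔ Avoids 2 w := by
  simp [Avoids, List.replicate, List.infix_cons_iff]

def fibWords : ℕ → List (List Bool)
  | 0 => [[]]
  | 1 => [[false], [true]]
  | n + 2 => (fibWords (n + 1)).map (false :: ·) ++ (fibWords n).map (true :: false :: ·)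

theorem mem_fibWords : ∀ {n : ℕ} {w : List Bool}, w ∈ fibWords n ↔ w.length = n ∧ Avoids 2 w
  | 0, w => by
    simp only [fibWords, List.mem_singleton, List.length_eq_zero_iff, iff_self_and]
    exact fun h ↦ avoids_two_of_length_le_one (by simp [h])
  | 1, w => by
    refine ⟨fun h ↦ ?_, fun ⟨hw, _⟩ ↦ ?_⟩
    · obtain rfl | rfl : w = [false] ∨ w = [true] := by simpa [fibWords] using h
      all_goals exact ⟨rfl, avoids_two_of_length_le_one le_rfl⟩
    · obtain ⟨b, rfl⟩ := List.length_eq_one_iff.1 hw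
      cases b <;> simp [fibWords]
  | n + 2, [] => by simp [fibWords]
  | n + 2, [true] => by simp [fibWords]
  | n + 2, false :: w => by
    simp [fibWords, mem_fibWords (n := n + 1), avoids_two_false_cons_iff]
  | n + 2, true :: false :: w => by
    simp [fibWords, mem_fibWords (n := n), avoids_two_true_false_cons_iff]
  | n + 2, true :: true :: w => by
    simp [fibWords, not_avoids_two_true_true_cons]

theorem nodup_fibWords : ∀ n, (fibWords n).Nodup
  | 0 => by simp [fibWords]
  | 1 => by simp [fibWords]
  | n + 2 => by
    refine ((nodup_fibWords (n + 1)).map fun _ _ h ↦ ?_).append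
      ((nodup_fibWords n).map fun _ _ h ↦ ?_) ?_
    · simpa using h
    · simpa using h
    · simp [List.disjoint_left]

theorem length_fibWords : ∀ n, (fibWords n).length = Nat.fib (n + 2)
  | 0 => rfl
  | 1 => rfl
  | n + 2 => by
    simp [fibWords, length_fibWords (n + 1), length_fibWords n, Nat.fib_add_two]
    omega

theorem fibCount_eq_fib (n : ℕ) : fibCount n = Nat.fib (n + 2) := by
  have : fibCount n = Nat.card (fibWords n).toFinset := by
    simp only [fibCount, ← mem_fibWords, ← List.mem_toFinset]
  rw [this, Nat.card_eq_finsetCard, List.toFinset_card_of_nodup (nodup_fibWords n),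
    length_fibWords]

theorem fibPop_eq_sum_count (b : Bool) (n : ℕ) :
    fibPop b n = ((fibWords n).map (·.count b)).sum := by
  have : fibPop b n =
      Nat.card {p : List Bool × ℕ // p.1 ∈ (fibWords n).toFinset ∧ p.1[p.2]? = some b} := by
    simp only [fibPop, ← and_assoc, ← mem_fibWords, ← List.mem_toFinset]
  rw [this, natCard_occurrences_eq_sum_count, List.sum_toFinset _ (nodup_fibWords n)]

theorem fibPop_true_add_fibPop_false (n : ℕ) :
    fibPop true n + fibPop false n = n * fibCount n := by
  rw [fibPop_eq_sum_count, fibPop_eq_sum_count, ← List.sum_map_add, fibCount_eq_fib,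
    ← length_fibWords]
  simp only [List.count_true_add_count_false]
  rw [List.map_congr_left fun w hw ↦ (mem_fibWords.1 hw).1, List.map_const', List.sum_replicate,
    smul_eq_mul, mul_comm]

theorem fibPop_true_add_two (n : ℕ) :
    fibPop true (n + 2) = fibPop true (n + 1) + fibPop true n + Nat.fib (n + 2) := by
  simp [fibPop_eq_sum_count, fibWords, Function.comp_def, List.sum_map_add, ← length_fibWords,
    add_assoc]

theorem five_mul_fibPop_true_add_fib :
    ∀ n, 5 * fibPop true n + Nat.fib (n + 1) = (n + 1) * (Nat.fib (n + 2) + Nat.fib n)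
  | 0 => by simp [fibPop_eq_sum_count, fibWords]
  | 1 => by simp [fibPop_eq_sum_count, fibWords, Nat.fib_add_two]
  | n + 2 => by
    have h₀ := five_mul_fibPop_true_add_fib n
    have h₁ := five_mul_fibPop_true_add_fib (n + 1)
    simp only [fibPop_true_add_two, Nat.fib_add_two] at h₀ h₁ ⊢
    ring_nf at h₀ h₁ ⊢
    linarith

theorem tendsto_fib_div_fib_add_two :
    Tendsto (fun n ↦ (Nat.fib n / Nat.fib (n + 2) : ℝ)) atTop (𝓝 (ψ ^ 2)) := by
  have h := tendsto_fib_div_fib_succ_atTop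
  convert h.mul (h.comp (tendsto_add_atTop_nat 1)) using 2 with n
  · simp [div_mul_div_cancel₀]
  · ring

theorem tendsto_fibPop_true_div_mul_fibCount :
    Tendsto (fun n ↦ (fibPop true n : ℝ) / (n * fibCount n)) atTop (𝓝 ((3 - φ) / 5)) := by
  have h₁ : Tendsto (fun n ↦ (Nat.fib (n + 1) / Nat.fib (n + 2) : ℝ)) atTop (𝓝 (-ψ)) :=
    tendsto_fib_div_fib_succ_atTop.comp (tendsto_add_atTop_nat 1)
  have h₂ := tendsto_fib_div_fib_add_two
  have hinv : Tendsto (fun n : ℕ ↦ (n : ℝ)⁻¹) atTop (𝓝 0) := tendsto_inv_atTop_nhds_zero_nat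
  have hlim := (((tendsto_const_nhds (x := (1 : ℝ)).add hinv).mul
    (tendsto_const_nhds (x := (1 : ℝ)).add h₂)).sub (hinv.mul h₁)).div_const 5
  convert hlim.congr' ?_ using 2
  · linear_combination (-1 / 5 : ℝ) * goldenConj_sq
  · filter_upwards [eventually_ge_atTop 1] with n hn
    have hclosed : 5 * (fibPop true n : ℝ) + Nat.fib (n + 1) =
        (n + 1) * (Nat.fib (n + 2) + Nat.fib n) := by
      exact_mod_cast five_mul_fibPop_true_add_fib n
    have hn : (n : ℝ) ≠ 0 := Nat.cast_ne_zero.2 (by omega)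
    have hfib : (Nat.fib (n + 2) : ℝ) ≠ 0 := by simp
    rw [fibCount_eq_fib]
    field_simp
    linear_combination (-1 : ℝ) * hclosed

theorem tendsto_fibPop_true_div_fibPop_false :
    Tendsto (fun n ↦ (fibPop true n : ℝ) / fibPop false n) atTop (𝓝 (2 - φ)) := by
  have hx : (3 - φ) / 5 ≠ 1 := (by linarith [goldenRatio_pos] : (3 - φ) / 5 < 1).ne
  have hsum (n : ℕ) : (fibPop true n + fibPop false n : ℝ) = n * fibCount n := by
    exact_mod_cast fibPop_true_add_fibPop_false n
  have hpos : ∀ᶠ n : ℕ in atTop, (fibPop true n + fibPop false n : ℝ) ≠ 0 := by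
    filter_upwards [eventually_ge_atTop 1] with n hn
    rw [hsum, fibCount_eq_fib]
    exact mul_ne_zero (Nat.cast_ne_zero.2 (by omega)) (by simp)
  convert (tendsto_fibPop_true_div_mul_fibCount.congr fun n ↦ by rw [hsum]).div_of_div_add
    hx hpos using 2
  rw [eq_div_iff (sub_ne_zero.2 hx.symm)]
  linear_combination (-1 / 5 : ℝ) * goldenRatio_sq

end FibonacciWords

open FibonacciWords in
theorem fibonacci_words_ones_frequency :
    Filter.Tendsto (fun n : ℕ => (fibPop true n : ℝ) / (fibPop false n : ℝ))
      Filter.atTop (nhds (2 - (1 + Real.sqrt 5) / 2)) ∧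
    Filter.Tendsto (fun n : ℕ => (fibPop true n : ℝ) / ((n : ℝ) * (fibCount n : ℝ)))
      Filter.atTop
      (nhds ((2 - (1 + Real.sqrt 5) / 2) / (3 - (1 + Real.sqrt 5) / 2))) := by
  change Tendsto _ _ (𝓝 (2 - φ)) ∧ Tendsto _ _ (𝓝 ((2 - φ) / (3 - φ)))
  refine ⟨tendsto_fibPop_true_div_fibPop_false, ?_⟩
  convert tendsto_fibPop_true_div_mul_fibCount using 2
  rw [div_eq_div_iff (by linarith [goldenRatio_lt_two]) (by norm_num)]
  linear_combination (-1 : ℝ) * goldenRatio_sq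
end

section
/- For every n ≥ 0 and q ≥ 1, the set of q-decreasing words of length n is absorbent: if w is q-decreasing of length n and 1 ≤ k < n, then the word w_1 w_2 … w_k 0^{n−k} is also q-decreasing. -/
lemma qdec_aux (q : ℕ) (hq : 1 ≤ q) (w : List Bool) (hd : QDecreasing q w)
    (k m : ℕ) (hm : 0 < m) :
    QDecreasing q (w.take k ++ List.replicate m false) := by
  have hq0 : 0 < q := hq
  induction hd generalizing k with
  | ones m0 =>
    have h : (List.replicate m0 true).take k ++ List.replicate m false
        = List.replicate (min k m0) true ++ List.replicate m false
            ++ List.replicate 0 true := by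
      simp [List.take_replicate]
    rw [h]
    exact QDecreasing.snoc _ m 0 hm (Nat.mul_pos hq0 hm) (QDecreasing.ones _)
  | snoc w a b ha hb hw ih =>
    rcases le_or_gt k w.length with hk | hk
    · have h : ((w ++ List.replicate a false) ++ List.replicate b true).take k
          = w.take k := by
        rw [List.take_append, List.take_append]
        have h1 : k - w.length = 0 := Nat.sub_eq_zero_of_le hk
        have h2 : k - (w ++ List.replicate a false).length = 0 := by
          simp only [List.length_append]
          omega
        simp [h1, h2]
        omega
      rw [h]
      exact ih k
    · rcases le_or_gt k (w.length + a) with hk2 | hk2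
      · have h : ((w ++ List.replicate a false) ++ List.replicate b true).take k
              ++ List.replicate m false
            = w ++ List.replicate (k - w.length + m) false ++ List.replicate 0 true := by
          rw [List.take_append, List.take_append]
        
          have h2 : k - (w ++ List.replicate a false).length = 0 := by
            simp only [List.length_append, List.length_replicate]
            omega
          rw [h2, List.take_of_length_le (le_of_lt hk), List.take_replicate]
          have h3 : min (k - w.length) a = k - w.length := by omega
          rw [h3]
          rw [List.replicate_add]
          simp [List.append_assoc]
        rw [h]
        have hpos : 0 < k - w.length + m := by omega
        exact QDecreasing.snoc _ _ 0 hpos (Nat.mul_pos hq0 hpos) hw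
      · have h : ((w ++ List.replicate a false) ++ List.replicate b true).take k
              ++ List.replicate m false
            = (w ++ List.replicate a false
                ++ List.replicate (min (k - (w.length + a)) b) true)
              ++ List.replicate m false ++ List.replicate 0 true := by
          rw [List.take_append]
          rw [List.take_of_length_le (by simp; omega), List.take_replicate]
          simp only [List.length_append, List.length_replicate]
          simp
        rw [h]
        refine QDecreasing.snoc _ m 0 hm (Nat.mul_pos hq0 hm) ?_
        exact QDecreasing.snoc w a _ ha (lt_of_le_of_lt (by omega) hb) hw

theorem qdecreasing_absorbent (q : ℕ) (hq : 1 ≤ q) (n : ℕ) (w : List Bool)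
    (hw : w.length = n) (hd : QDecreasing q w) (k : ℕ) (hk1 : 1 ≤ k) (hk2 : k < n) :
    QDecreasing q (w.take k ++ List.replicate (n - k) false) := by
  exact qdec_aux q hq w hd k (n - k) (Nat.sub_pos_of_lt hk2)
end
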